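/- arXiv:1801.00416 — 11 statements merged into one kernel-verified Lean document; each statement's English description precedes it below -/
import Mathlib

section
/- For all integers n > k ≥ 1, msum(n, n−k) = msum(n, k), where msum(n,k) = min over permutations π of {1,...,n} of (max_i s_i − k(n+1)/2), and s_i denotes the cyclic k-consecutive sum of π starting at position i. -/
/-- The cyclic `k`-consecutive sum of the permutation `π` of `{1,…,n}`
(realized as `Equiv.Perm (Fin n)` with values `π i + 1 ∈ {1,…,n}`) starting at position `i`. -/
def ksum (n k : ℕ) (π : Equiv.Perm (Fin n)) (i : ℕ) : ℕ :=
  ∑ j ∈ Finset.range k,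
    if h : (i + j) % n < n then ((π ⟨(i + j) % n, h⟩ : ℕ) + 1) else 0

/-- The maximal cyclic `k`-consecutive sum of `π`. -/
def maxksum (n k : ℕ) (π : Equiv.Perm (Fin n)) : ℕ :=
  Finset.sup (Finset.range n) (ksum n k π)

/-- `msum n k` : minimum over permutations of `max_i s_i - k(n+1)/2`. -/
noncomputable def msum (n k : ℕ) : ℚ :=
  Finset.inf' (Finset.univ : Finset (Equiv.Perm (Fin n))) ⟨1, Finset.mem_univ 1⟩
    (fun π => (maxksum n k π : ℚ) - (k : ℚ) * ((n : ℚ) + 1) / 2)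

/-- `disc n k` : minimum over permutations of `max_i |s_i - k(n+1)/2|`
(computed as `max_i |2 s_i - k(n+1)| / 2`). -/
noncomputable def disc (n k : ℕ) : ℚ :=
  Finset.inf' (Finset.univ : Finset (Equiv.Perm (Fin n))) ⟨1, Finset.mem_univ 1⟩
    (fun π => ((Finset.sup (Finset.range n)
        (fun i => ((2 * (ksum n k π i : ℤ)) - (k : ℤ) * ((n : ℤ) + 1)).natAbs) : ℕ) : ℚ) / 2)

/- ### Auxiliary lemmas -/

lemma rot_sum (g : ℕ → ℕ) (n i : ℕ) :
    ∑ j ∈ Finset.range n, g ((i + j) % n) = ∑ j ∈ Finset.range n, g (j % n) := by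
  induction i with
  | zero => simp
  | succ i ih =>
    rcases Nat.eq_zero_or_pos n with hn | hn
    · simp [hn]
    rw [← ih]
    set f : ℕ → ℕ := fun j => g ((i + j) % n) with hf
    have h1 : ∑ j ∈ Finset.range (n + 1), f j = (∑ j ∈ Finset.range n, f (j + 1)) + f 0 :=
      Finset.sum_range_succ' f n
    have h2 : ∑ j ∈ Finset.range (n + 1), f j = (∑ j ∈ Finset.range n, f j) + f n :=
      Finset.sum_range_succ f n
    have h3 : f n = f 0 := by simp [hf]
    have h4 : ∀ j, g ((i + 1 + j) % n) = f (j + 1) := by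
      intro j; simp only [hf]; ring_nf
    calc ∑ j ∈ Finset.range n, g ((i + 1 + j) % n)
        = ∑ j ∈ Finset.range n, f (j + 1) := by
          exact Finset.sum_congr rfl fun j _ => h4 j
      _ = ∑ j ∈ Finset.range n, f j := by omega

lemma ksum_mod (n k : ℕ) (π : Equiv.Perm (Fin n)) (i : ℕ) :
    ksum n k π i = ksum n k π (i % n) := by
  unfold ksum
  refine Finset.sum_congr rfl fun j _ => ?_
  have : (i + j) % n = (i % n + j) % n := by
    conv_lhs => rw [← Nat.mod_add_mod]
  simp_rw [this]

lemma ksum_split (n a b : ℕ) (π : Equiv.Perm (Fin n)) (i : ℕ) :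
    ksum n (a + b) π i = ksum n a π i + ksum n b π (i + a) := by
  unfold ksum
  rw [Finset.sum_range_add]
  congr 1
  refine Finset.sum_congr rfl fun j _ => ?_
  have : i + (a + j) = i + a + j := by ring
  simp_rw [this]

lemma ksum_full (n : ℕ) (hn : 0 < n) (π : Equiv.Perm (Fin n)) (i : ℕ) :
    ksum n n π i = ∑ j ∈ Finset.range n, (j + 1) := by
  unfold ksum
  set g : ℕ → ℕ := fun m => if h : m < n then ((π ⟨m, h⟩ : ℕ) + 1) else 0 with hg
  have h1 : ∑ j ∈ Finset.range n, g ((i + j) % n) = ∑ j ∈ Finset.range n, g (j % n) :=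
    rot_sum g n i
  have h2 : ∑ j ∈ Finset.range n, g (j % n) = ∑ j ∈ Finset.range n, g j :=
    Finset.sum_congr rfl fun j hj => by
      rw [Nat.mod_eq_of_lt (Finset.mem_range.mp hj)]
  have h3 : ∑ j ∈ Finset.range n, g j = ∑ x : Fin n, ((π x : ℕ) + 1) := by
    rw [← Fin.sum_univ_eq_sum_range]
    refine Finset.sum_congr rfl fun x _ => ?_
    simp [hg, x.isLt]
  have h4 : ∑ x : Fin n, ((π x : ℕ) + 1) = ∑ x : Fin n, ((x : ℕ) + 1) :=
    Equiv.sum_comp π (fun x => (x : ℕ) + 1)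
  have h5 : ∑ x : Fin n, ((x : ℕ) + 1) = ∑ j ∈ Finset.range n, (j + 1) :=
    Fin.sum_univ_eq_sum_range (fun j => j + 1) n
  calc ∑ j ∈ Finset.range n, (if h : (i + j) % n < n then ((π ⟨(i + j) % n, h⟩ : ℕ) + 1) else 0)
      = ∑ j ∈ Finset.range n, g ((i + j) % n) := rfl
    _ = ∑ j ∈ Finset.range n, (j + 1) := by rw [h1, h2, h3, h4, h5]

lemma ksum_rev (n k : ℕ) (hn : 0 < n) (π : Equiv.Perm (Fin n)) (i : ℕ) :
    ksum n k (π.trans Fin.revPerm) i + ksum n k π i = k * (n + 1) := by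
  unfold ksum
  rw [← Finset.sum_add_distrib]
  have : ∀ j ∈ Finset.range k,
      ((if h : (i + j) % n < n then (((π.trans Fin.revPerm) ⟨(i + j) % n, h⟩ : ℕ) + 1) else 0) +
        if h : (i + j) % n < n then ((π ⟨(i + j) % n, h⟩ : ℕ) + 1) else 0) = n + 1 := by
    intro j _
    have h : (i + j) % n < n := Nat.mod_lt _ hn
    simp only [dif_pos h, Equiv.trans_apply]
    have hv : ((Fin.revPerm (π ⟨(i + j) % n, h⟩) : Fin n) : ℕ) = n - 1 - (π ⟨(i + j) % n, h⟩ : ℕ) := by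
      simp [Fin.revPerm, Fin.val_rev]
      omega
    have hlt : (π ⟨(i + j) % n, h⟩ : ℕ) < n := (π _).isLt
    omega
  rw [Finset.sum_congr rfl this, Finset.sum_const, smul_eq_mul, Finset.card_range]

lemma sup_shift (n k s : ℕ) (hn : 0 < n) (π : Equiv.Perm (Fin n)) :
    Finset.sup (Finset.range n) (fun i => ksum n k π (i + s)) = maxksum n k π := by
  apply le_antisymm
  · apply Finset.sup_le
    intro i _
    rw [ksum_mod]
    exact Finset.le_sup (Finset.mem_range.mpr (Nat.mod_lt _ hn))
  · apply Finset.sup_le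
    intro i hi
    have hi' := Finset.mem_range.mp hi
    set i' : ℕ := (i + n - s % n) % n with hi'def
    have hmem : i' ∈ Finset.range n := Finset.mem_range.mpr (Nat.mod_lt _ hn)
    have key : ksum n k π (i' + s) = ksum n k π i := by
      rw [ksum_mod n k π (i' + s)]
      have h1 : (i' + s) % n = i := by
        rw [hi'def, Nat.mod_add_mod]
        have hs : s % n ≤ n := le_of_lt (Nat.mod_lt _ hn)
        have hmul : n * (1 + s / n) = n + n * (s / n) := by ring
        have heq : i + n - s % n + s = i + n * (1 + s / n) := by
          have := Nat.div_add_mod s n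
          omega
        rw [heq, Nat.add_mul_mod_self_left, Nat.mod_eq_of_lt hi']
      rw [h1]
    calc ksum n k π i = ksum n k π (i' + s) := key.symm
      _ ≤ _ := Finset.le_sup (f := fun i => ksum n k π (i + s)) hmem

lemma key_nat (n k : ℕ) (hk : 1 ≤ k) (hkn : k < n) (π : Equiv.Perm (Fin n)) :
    maxksum n (n - k) π + k * (n + 1) =
      maxksum n k (π.trans Fin.revPerm) + ∑ j ∈ Finset.range n, (j + 1) := by
  have hn : 0 < n := lt_trans (Nat.lt_of_lt_of_le Nat.zero_lt_one hk) hkn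
  obtain ⟨m, hm⟩ : ∃ m, n - k = m := ⟨n - k, rfl⟩
  rw [hm]
  set T := ∑ j ∈ Finset.range n, (j + 1) with hT
  set π' := π.trans Fin.revPerm with hπ'
  have hmk : m + k = n := by omega
  -- pointwise identity
  have point : ∀ i, ksum n m π i + k * (n + 1) = ksum n k π' (i + m) + T := by
    intro i
    have h1 : ksum n m π i + ksum n k π (i + m) = T := by
      rw [← ksum_split n m k π i, hmk, ksum_full n hn π i]
    have h2 : ksum n k π' (i + m) + ksum n k π (i + m) = k * (n + 1) :=
      ksum_rev n k hn π (i + m)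
    omega
  have hne : (Finset.range n).Nonempty := ⟨0, Finset.mem_range.mpr hn⟩
  -- sups are attained
  obtain ⟨i0, hi0, hA⟩ := Finset.exists_mem_eq_sup (Finset.range n) hne (ksum n m π)
  obtain ⟨j0, hj0, hB⟩ := Finset.exists_mem_eq_sup (Finset.range n)
    hne (fun i => ksum n k π' (i + m))
  have hBmax : Finset.sup (Finset.range n) (fun i => ksum n k π' (i + m)) = maxksum n k π' :=
    sup_shift n k m hn π'
  apply le_antisymm
  · rw [show maxksum n m π = ksum n m π i0 from hA, ← hBmax,
      show Finset.sup (Finset.range n) (fun i => ksum n k π' (i + m)) = ksum n k π' (j0 + m)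
        from hB]
    have := point i0
    have hle : ksum n k π' (i0 + m) ≤ ksum n k π' (j0 + m) := by
      rw [← hB]; exact Finset.le_sup (f := fun i => ksum n k π' (i + m)) hi0
    omega
  · rw [← hBmax,
      show Finset.sup (Finset.range n) (fun i => ksum n k π' (i + m)) = ksum n k π' (j0 + m)
        from hB]
    have := point j0
    have hle : ksum n m π j0 ≤ maxksum n m π := Finset.le_sup hj0
    omega

lemma gauss (n : ℕ) : 2 * ∑ j ∈ Finset.range n, (j + 1) = n * (n + 1) := by
  induction n with
  | zero => simp
  | succ n ih => rw [Finset.sum_range_succ, Nat.mul_add, ih]; ring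

lemma key_rat (n k : ℕ) (hk : 1 ≤ k) (hkn : k < n) (π : Equiv.Perm (Fin n)) :
    (maxksum n (n - k) π : ℚ) - ((n - k : ℕ) : ℚ) * ((n : ℚ) + 1) / 2 =
      (maxksum n k (π.trans Fin.revPerm) : ℚ) - (k : ℚ) * ((n : ℚ) + 1) / 2 := by
  have h1 := key_nat n k hk hkn π
  have h2 := gauss n
  have hmk : ((n - k : ℕ) : ℚ) + (k : ℚ) = (n : ℚ) := by
    have : (n - k) + k = n := by omega
    exact_mod_cast congrArg (Nat.cast : ℕ → ℚ) this
  have h1' : (maxksum n (n - k) π : ℚ) + (k : ℚ) * ((n : ℚ) + 1) =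
      (maxksum n k (π.trans Fin.revPerm) : ℚ) + ((∑ j ∈ Finset.range n, (j + 1) : ℕ) : ℚ) := by
    exact_mod_cast congrArg (Nat.cast : ℕ → ℚ) h1
  have h2' : 2 * ((∑ j ∈ Finset.range n, (j + 1) : ℕ) : ℚ) = (n : ℚ) * ((n : ℚ) + 1) := by
    exact_mod_cast congrArg (Nat.cast : ℕ → ℚ) h2
  have hnk : ((n - k : ℕ) : ℚ) = (n : ℚ) - (k : ℚ) := by linarith
  rw [hnk]
  linarith

theorem stmt1 (n k : ℕ) (hk : 1 ≤ k) (hkn : k < n) : msum n (n - k) = msum n k := by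
  have hmain : ∀ σ : Equiv.Perm (Fin n),
      (maxksum n (n - k) (σ.trans Fin.revPerm) : ℚ) - ((n - k : ℕ) : ℚ) * ((n : ℚ) + 1) / 2 =
      (maxksum n k σ : ℚ) - (k : ℚ) * ((n : ℚ) + 1) / 2 := by
    intro σ
    have key := key_rat n k hk hkn (σ.trans Fin.revPerm)
    have hσ : (σ.trans Fin.revPerm).trans Fin.revPerm = σ := by
      ext x
      simp [Fin.revPerm, Fin.rev_rev]
    rwa [hσ] at key
  unfold msum
  apply le_antisymm
  · apply Finset.le_inf'
    intro σ _
    rw [← hmain σ]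
    exact Finset.inf'_le _ (Finset.mem_univ _)
  · apply Finset.le_inf'
    intro σ _
    rw [key_rat n k hk hkn σ]
    exact Finset.inf'_le _ (Finset.mem_univ _)
end

section
/- Let a_1,...,a_m be pairwise distinct nonnegative integers arranged cyclically (a_0 = a_m, a_{m+1} = a_1), and let α be the number of indices i ∈ {1,...,m} with a_{i−1} < a_i > a_{i+1} (cyclic local maxima). Then ∑_{i=1}^m max{a_i, a_{i+1}} ≥ ∑_{i=1}^m a_i + max{a_1,...,a_m} − min{a_1,...,a_m} + (α − 1). -/
theorem stmt4 (m : ℕ) [NeZero m] (a : ZMod m → ℕ) (ha : Function.Injective a) :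
    ((∑ i : ZMod m, max (a i) (a (i + 1)) : ℕ) : ℤ) ≥
      (∑ i : ZMod m, (a i : ℤ)) +
        ((Finset.univ.sup' ⟨0, Finset.mem_univ 0⟩ a : ℕ) : ℤ) -
        ((Finset.univ.inf' ⟨0, Finset.mem_univ 0⟩ a : ℕ) : ℤ) +
        (((Finset.univ.filter
            (fun i : ZMod m => a (i - 1) < a i ∧ a (i + 1) < a i)).card : ℤ) - 1) := by
  classical
  obtain ⟨pM, -, hpM⟩ := Finset.exists_mem_eq_sup'
    (⟨0, Finset.mem_univ 0⟩ : (Finset.univ : Finset (ZMod m)).Nonempty) a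
  obtain ⟨pm, -, hpm⟩ := Finset.exists_mem_eq_inf'
    (⟨0, Finset.mem_univ 0⟩ : (Finset.univ : Finset (ZMod m)).Nonempty) a
  set M := Finset.univ.sup' ⟨0, Finset.mem_univ 0⟩ a with hMdef
  set mn := Finset.univ.inf' ⟨0, Finset.mem_univ 0⟩ a with hmndef
  set peaks := Finset.univ.filter
      (fun i : ZMod m => a (i - 1) < a i ∧ a (i + 1) < a i) with hpeaksdef
  have hle : ∀ i, a i ≤ M := fun i => Finset.le_sup' a (Finset.mem_univ i)
  have hge : ∀ i, mn ≤ a i := fun i => Finset.inf'_le a (Finset.mem_univ i)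
  have hmM : mn ≤ M := hpM ▸ hge pM
  -- existence for the walk-back function
  have hex : ∀ t ∈ Finset.Ico mn M, ∃ k : ℕ, 1 ≤ k ∧ a (pM - (k : ZMod m)) ≤ t := by
    intro t ht
    rw [Finset.mem_Ico] at ht
    refine ⟨(pM - pm).val, ?_, ?_⟩
    · rcases Nat.eq_zero_or_pos (pM - pm).val with h0 | h
      · exfalso
        have h1 : pM - pm = 0 := by rwa [ZMod.val_eq_zero] at h0
        have h2 : pM = pm := by rwa [sub_eq_zero] at h1
        have h3 : M = mn := by rw [hpM, hpm, h2]
        omega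
      · exact h
    · have h4 : (((pM - pm).val : ℕ) : ZMod m) = pM - pm := ZMod.natCast_rightInverse _
      rw [h4, sub_sub_cancel, ← hpm]
      exact ht.1
  set K : ℕ → ℕ := fun t =>
    if h : ∃ k : ℕ, 1 ≤ k ∧ a (pM - (k : ZMod m)) ≤ t then Nat.find h else 0 with hKdef
  have hKspec : ∀ t ∈ Finset.Ico mn M,
      (1 ≤ K t ∧ a (pM - (K t : ZMod m)) ≤ t) ∧
        ∀ j : ℕ, j < K t → t < a (pM - (j : ZMod m)) := by
    intro t ht
    have h := hex t ht
    have hKt : K t = Nat.find h := by rw [hKdef]; simp [h]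
    refine ⟨by rw [hKt]; exact Nat.find_spec h, ?_⟩
    intro j hj
    rcases Nat.eq_zero_or_pos j with rfl | hj1
    · have : t < M := (Finset.mem_Ico.mp ht).2
      simpa [hpM.symm] using this
    · have hj' : j < Nat.find h := by rwa [hKt] at hj
      have hmin := Nat.find_min h hj'
      push_neg at hmin
      exact hmin hj1
  have hsub : ∀ k : ℕ, 1 ≤ k →
      pM - (k : ZMod m) + 1 = pM - ((k - 1 : ℕ) : ZMod m) := by
    intro k hk
    have : (k : ZMod m) = ((k - 1 : ℕ) : ZMod m) + 1 := by
      conv_lhs => rw [show k = (k - 1) + 1 by omega]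
      push_cast
      ring
    rw [this]
    ring
  -- the cross-case contradiction
  have hcross : ∀ t ∈ Finset.Ico mn M, ∀ p ∈ peaks.erase pM,
      pM - (K t : ZMod m) = p - 1 → t = a p - 1 → False := by
    intro t ht p hp h1 h2
    obtain ⟨⟨hK1, hK2⟩, hK3⟩ := hKspec t ht
    rw [Finset.mem_erase, hpeaksdef, Finset.mem_filter] at hp
    obtain ⟨hpne, -, hpk1, hpk2⟩ := hp
    have hp' : p = pM - ((K t - 1 : ℕ) : ZMod m) := by
      rw [← hsub _ hK1, h1, sub_add_cancel]
    have hK2' : 2 ≤ K t := by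
      rcases Nat.lt_or_ge (K t) 2 with hc | hc
      · have h1' : K t = 1 := by omega
        rw [h1'] at hp'
        norm_num at hp'
        exact absurd hp' hpne
      · exact hc
    have hps : p + 1 = pM - ((K t - 2 : ℕ) : ZMod m) := by
      rw [hp', hsub (K t - 1) (by omega)]
      congr 2
    have := hK3 (K t - 2) (by omega)
    rw [← hps] at this
    -- this : t < a (p + 1), h2 : t = a p - 1, hpk2 : a (p+1) < a p, hpk1 : a (p-1) < a p
    omega
  -- key counting inequality
  have key : (M - mn) + (peaks.erase pM).card ≤ ∑ i : ZMod m, (a (i + 1) - a i) := by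
    have h1 : ∑ i : ZMod m, (a (i + 1) - a i) =
        (Finset.univ.sigma fun i : ZMod m => Finset.Ico (a i) (a (i + 1))).card := by
      rw [Finset.card_sigma]
      simp
    have h2 : (M - mn) + (peaks.erase pM).card =
        ((Finset.Ico mn M).disjSum (peaks.erase pM)).card := by
      rw [Finset.card_disjSum, Nat.card_Ico]
    rw [h1, h2]
    apply Finset.card_le_card_of_injOn
      (Sum.elim (fun t => ⟨pM - (K t : ZMod m), t⟩)
        (fun p => ⟨p - 1, a p - 1⟩) : ℕ ⊕ ZMod m → (_ : ZMod m) × ℕ)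
    · rintro (t | p) hx
      · rw [Finset.mem_coe, Finset.inl_mem_disjSum] at hx
        obtain ⟨⟨hK1, hK2⟩, hK3⟩ := hKspec t hx
        simp only [Finset.mem_coe, Sum.elim_inl, Finset.mem_sigma, Finset.mem_univ, Finset.mem_Ico, true_and]
        refine ⟨hK2, ?_⟩
        rw [hsub _ hK1]
        exact hK3 _ (by omega)
      · rw [Finset.mem_coe, Finset.inr_mem_disjSum, Finset.mem_erase, hpeaksdef, Finset.mem_filter] at hx
        obtain ⟨hpne, -, hp1, hp2⟩ := hx
        simp only [Finset.mem_coe, Sum.elim_inr, Finset.mem_sigma, Finset.mem_univ, Finset.mem_Ico, true_and,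
          sub_add_cancel]
        omega
    · rintro (t | p) hx (t' | p') hy hfe <;>
        simp only [Finset.mem_coe, Finset.inl_mem_disjSum, Finset.inr_mem_disjSum] at hx hy <;>
        simp only [Sum.elim_inl, Sum.elim_inr] at hfe <;>
        obtain ⟨h1, h2'⟩ := Sigma.ext_iff.mp hfe <;>
        have h2 := eq_of_heq h2'
      · exact congrArg Sum.inl h2
      · exact (hcross t hx p' hy h1 h2).elim
      · exact (hcross t' hy p hx h1.symm h2.symm).elim
      · exact congrArg Sum.inr (sub_left_inj.mp h1)
  -- pointwise max identity
  have hsum : (∑ i : ZMod m, max (a i) (a (i + 1))) =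
      (∑ i : ZMod m, a i) + ∑ i : ZMod m, (a (i + 1) - a i) := by
    rw [← Finset.sum_add_distrib]
    exact Finset.sum_congr rfl fun i _ => by omega
  have herase : peaks.card - 1 ≤ (peaks.erase pM).card := Finset.pred_card_le_card_erase
  have hcast : ∑ i : ZMod m, (a i : ℤ) = ((∑ i : ZMod m, a i : ℕ) : ℤ) := by push_cast; rfl
  rw [hcast]
  omega
end

section
/- Let a_1,...,a_m be pairwise distinct nonnegative integers arranged cyclically, and let α be the number of cyclic local maxima (indices i with a_{i−1} < a_i > a_{i+1}, indices mod m). Then ∑_{i=1}^{m} |a_i − a_{i+1}| ≥ 2(m−1) + 2(α − 1) ≥ 2(m−1), where a_{m+1} = a_1. -/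
section Helpers
open Finset

lemma findCross {m : ℕ} [NeZero m] (a : ZMod m → ℕ) (t : ℕ) (s j : ZMod m)
    (hs : a s ≤ t) (hj : t < a j) :
    ∃ k : ℕ, 1 ≤ k ∧ k ≤ (j - s).val ∧
      a (s + ((k - 1 : ℕ) : ZMod m)) ≤ t ∧ t < a (s + (k : ZMod m)) := by
  classical
  have hv : s + ((j - s).val : ZMod m) = j := by
    rw [ZMod.natCast_val, ZMod.cast_id]; ring
  have hex : ∃ k : ℕ, t < a (s + (k : ZMod m)) := ⟨(j - s).val, by rw [hv]; exact hj⟩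
  set k := Nat.find hex with hkdef
  have hk : t < a (s + (k : ZMod m)) := Nat.find_spec hex
  have hk0 : 1 ≤ k := by
    rcases Nat.eq_zero_or_pos k with h | h
    · exfalso; rw [h] at hk; simp at hk; omega
    · exact h
  have hkv : k ≤ (j - s).val := Nat.find_le (by rw [hv]; exact hj)
  have hkm : a (s + ((k - 1 : ℕ) : ZMod m)) ≤ t := by
    have := Nat.find_min hex (show k - 1 < k by omega)
    omega
  exact ⟨k, hk0, hkv, hkm, hk⟩

lemma castPred {m : ℕ} [NeZero m] (k : ℕ) (hk : 1 ≤ k) :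
    ((k - 1 : ℕ) : ZMod m) + 1 = (k : ZMod m) := by
  have : ((k - 1 : ℕ) : ZMod m) = (k : ZMod m) - 1 := by
    rw [Nat.cast_sub hk]; simp
  rw [this, sub_add_cancel]

/-- One up-crossing at each level between min and max. -/
lemma oneCross {m : ℕ} [NeZero m] (a : ZMod m → ℕ) (t : ℕ) (i₀ j₀ : ZMod m)
    (h0 : a i₀ ≤ t) (h1 : t < a j₀) :
    1 ≤ (univ.filter (fun i : ZMod m => a i ≤ t ∧ t < a (i + 1))).card := by
  obtain ⟨k, hk1, _, hlo, hhi⟩ := findCross a t i₀ j₀ h0 h1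
  refine Finset.card_pos.mpr ⟨i₀ + ((k - 1 : ℕ) : ZMod m), ?_⟩
  rw [Finset.mem_filter]
  refine ⟨Finset.mem_univ _, hlo, ?_⟩
  rw [add_assoc, castPred k hk1]
  exact hhi

/-- Two up-crossings at the level just below a non-global-max peak. -/
lemma twoCross {m : ℕ} [NeZero m] (a : ZMod m → ℕ) (ha : Function.Injective a)
    (p j₀ : ZMod m) (hpj : p ≠ j₀) (hpk1 : a (p - 1) < a p) (hpk2 : a (p + 1) < a p)
    (hmax : a p < a j₀) :
    2 ≤ (univ.filter (fun i : ZMod m => a i ≤ (a p - 1) ∧ (a p - 1) < a (i + 1))).card := by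
  classical
  set t := a p - 1 with ht
  have hp1 : 1 ≤ a p := by omega
  -- first crossing at p - 1
  have hi₁ : p - 1 ∈ univ.filter (fun i : ZMod m => a i ≤ t ∧ t < a (i + 1)) := by
    rw [Finset.mem_filter, sub_add_cancel]
    exact ⟨Finset.mem_univ _, by omega, by omega⟩
  -- second crossing via walk from p + 1 to j₀
  have hs : a (p + 1) ≤ t := by omega
  have hj : t < a j₀ := by omega
  obtain ⟨k, hk1, hkv, hlo, hhi⟩ := findCross a t (p + 1) j₀ hs hj
  set i₂ := (p + 1) + ((k - 1 : ℕ) : ZMod m) with hi₂def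
  have hi₂ : i₂ ∈ univ.filter (fun i : ZMod m => a i ≤ t ∧ t < a (i + 1)) := by
    rw [Finset.mem_filter]
    refine ⟨Finset.mem_univ _, hlo, ?_⟩
    rw [hi₂def, add_assoc, castPred k hk1]
    exact hhi
  have hne : i₂ ≠ p - 1 := by
    intro heq
    have heq2 : (p + 1) + (k : ZMod m) = p := by
      have := congrArg (· + 1) heq
      simp only [sub_add_cancel] at this
      rw [hi₂def, add_assoc, castPred k hk1] at this
      exact this
    have hdvd : (m : ℕ) ∣ k + 1 := by
      have h3 : (k : ZMod m) = -1 := by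
        have h4 : p + 1 + (k : ZMod m) = p + 1 + (-1) := by rw [heq2]; ring
        exact add_left_cancel h4
      have : ((k + 1 : ℕ) : ZMod m) = 0 := by
        push_cast
        rw [h3]; ring
      exact (ZMod.natCast_eq_zero_iff _ _).mp this
    have hvlt : (j₀ - (p + 1)).val < m := ZMod.val_lt _
    have hkm : k + 1 = m := Nat.le_antisymm (by omega) (Nat.le_of_dvd (by omega) hdvd)
    have hkv' : k = (j₀ - (p + 1)).val := by omega
    have : (p + 1) + (((j₀ - (p + 1)).val : ℕ) : ZMod m) = j₀ := by
      rw [ZMod.natCast_val, ZMod.cast_id]; ring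
    rw [← hkv'] at this
    exact hpj (heq2.symm.trans this)
  exact Finset.one_lt_card.mpr ⟨i₂, hi₂, p - 1, hi₁, hne⟩


lemma absCount (x y N : ℕ) (hx : x ≤ N) (hy : y ≤ N) :
    |(x : ℤ) - y| = (((Finset.range N).filter
      (fun t => (x ≤ t ∧ t < y) ∨ (y ≤ t ∧ t < x))).card : ℤ) := by
  have : (Finset.range N).filter (fun t => (x ≤ t ∧ t < y) ∨ (y ≤ t ∧ t < x))
      = Finset.Ico (min x y) (max x y) := by
    ext t
    simp only [Finset.mem_filter, Finset.mem_range, Finset.mem_Ico]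
    omega
  rw [this, Nat.card_Ico]
  rcases le_total x y with h | h
  · rw [abs_of_nonpos (by omega)]; omega
  · rw [abs_of_nonneg (by omega)]; omega

lemma upEqDown {m : ℕ} [NeZero m] (a : ZMod m → ℕ) (t : ℕ) :
    (univ.filter (fun i : ZMod m => a i ≤ t ∧ t < a (i + 1))).card
      = (univ.filter (fun i : ZMod m => a (i + 1) ≤ t ∧ t < a i)).card := by
  classical
  have key : ((univ.filter (fun i : ZMod m => a i ≤ t ∧ t < a (i + 1))).card : ℤ)
      - ((univ.filter (fun i : ZMod m => a (i + 1) ≤ t ∧ t < a i)).card : ℤ)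
      = ∑ i : ZMod m, ((if t < a (i + 1) then (1 : ℤ) else 0) - (if t < a i then 1 else 0)) := by
    rw [Finset.card_filter, Finset.card_filter]
    push_cast
    rw [← Finset.sum_sub_distrib]
    apply Finset.sum_congr rfl
    intro i _
    split_ifs <;> omega
  have h2 : ∑ i : ZMod m, ((if t < a (i + 1) then (1 : ℤ) else 0) - (if t < a i then 1 else 0)) = 0 := by
    rw [Finset.sum_sub_distrib]
    have := Equiv.sum_comp (Equiv.addRight (1 : ZMod m)) (fun i => if t < a i then (1:ℤ) else 0)
    simp only [Equiv.coe_addRight] at this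
    exact sub_eq_zero.mpr this
  omega

/-- Total cyclic variation equals twice the total up-crossing count over levels below `N`. -/
lemma sumAbsEq {m : ℕ} [NeZero m] (a : ZMod m → ℕ) (N : ℕ) (hN : ∀ i, a i ≤ N) :
    (∑ i : ZMod m, |(a i : ℤ) - (a (i + 1) : ℤ)|)
      = 2 * ∑ t ∈ Finset.range N,
          ((univ.filter (fun i : ZMod m => a i ≤ t ∧ t < a (i + 1))).card : ℤ) := by
  classical
  have step1 : (∑ i : ZMod m, |(a i : ℤ) - (a (i + 1) : ℤ)|)
      = ∑ i : ZMod m, (((Finset.range N).filter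
          (fun t => (a i ≤ t ∧ t < a (i + 1)) ∨ (a (i + 1) ≤ t ∧ t < a i))).card : ℤ) := by
    apply Finset.sum_congr rfl
    intro i _
    exact absCount _ _ N (hN i) (hN (i + 1))
  rw [step1]
  have step2 : ∀ i : ZMod m, (((Finset.range N).filter
          (fun t => (a i ≤ t ∧ t < a (i + 1)) ∨ (a (i + 1) ≤ t ∧ t < a i))).card : ℤ)
      = ∑ t ∈ Finset.range N,
          ((if a i ≤ t ∧ t < a (i + 1) then (1:ℤ) else 0) + (if a (i + 1) ≤ t ∧ t < a i then 1 else 0)) := by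
    intro i
    rw [Finset.card_filter]
    push_cast
    apply Finset.sum_congr rfl
    intro t _
    split_ifs <;> omega
  simp only [step2]
  rw [Finset.sum_comm]
  rw [Finset.mul_sum]
  apply Finset.sum_congr rfl
  intro t _
  rw [Finset.sum_add_distrib]
  have hu : ∑ i : ZMod m, (if a i ≤ t ∧ t < a (i + 1) then (1:ℤ) else 0)
      = ((univ.filter (fun i : ZMod m => a i ≤ t ∧ t < a (i + 1))).card : ℤ) := by
    rw [Finset.card_filter]; push_cast; rfl
  have hd : ∑ i : ZMod m, (if a (i + 1) ≤ t ∧ t < a i then (1:ℤ) else 0)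
      = ((univ.filter (fun i : ZMod m => a (i + 1) ≤ t ∧ t < a i)).card : ℤ) := by
    rw [Finset.card_filter]; push_cast; rfl
  rw [hu, hd, ← upEqDown a t]
  ring



variable {m : ℕ} [NeZero m]

lemma main_aux (a : ZMod m → ℕ) (ha : Function.Injective a)
    (oneCross : ∀ (t : ℕ) (i₀ j₀ : ZMod m), a i₀ ≤ t → t < a j₀ →
      1 ≤ (univ.filter (fun i : ZMod m => a i ≤ t ∧ t < a (i + 1))).card)
    (twoCross : ∀ (p j₀ : ZMod m), p ≠ j₀ → a (p - 1) < a p → a (p + 1) < a p → a p < a j₀ →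
      2 ≤ (univ.filter (fun i : ZMod m => a i ≤ (a p - 1) ∧ (a p - 1) < a (i + 1))).card)
    (sumAbsEq : ∀ N : ℕ, (∀ i, a i ≤ N) →
      (∑ i : ZMod m, |(a i : ℤ) - (a (i + 1) : ℤ)|)
        = 2 * ∑ t ∈ Finset.range N,
            ((univ.filter (fun i : ZMod m => a i ≤ t ∧ t < a (i + 1))).card : ℤ)) :
    (∑ i : ZMod m, |(a i : ℤ) - (a (i + 1) : ℤ)|) ≥
      2 * ((m : ℤ) - 1) +
        2 * (((Finset.univ.filter
            (fun i : ZMod m => a (i - 1) < a i ∧ a (i + 1) < a i)).card : ℤ) - 1) ∧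
    (∑ i : ZMod m, |(a i : ℤ) - (a (i + 1) : ℤ)|) ≥ 2 * ((m : ℤ) - 1) := by
  classical
  have hne : (univ : Finset (ZMod m)).Nonempty := univ_nonempty
  set N := univ.sup a with hNdef
  have hN : ∀ i, a i ≤ N := fun i => Finset.le_sup (mem_univ i)
  obtain ⟨j₀, -, hj₀⟩ := Finset.exists_mem_eq_sup univ hne a
  set μ := univ.inf' hne a with hμdef
  have hμ : ∀ i, μ ≤ a i := fun i => Finset.inf'_le a (mem_univ i)
  obtain ⟨i₀, -, hi₀⟩ := Finset.exists_mem_eq_inf' hne a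
  -- cardinality facts
  have hmcard : m ≤ N - μ + 1 := by
    have himg : (univ.image a) ⊆ Finset.Icc μ N := by
      intro x hx
      obtain ⟨i, -, rfl⟩ := Finset.mem_image.mp hx
      exact Finset.mem_Icc.mpr ⟨hμ i, hN i⟩
    have := Finset.card_le_card himg
    rw [Finset.card_image_of_injective _ ha, Finset.card_univ, ZMod.card, Nat.card_Icc] at this
    have hμN : μ ≤ N := le_trans (hμ i₀) (hN i₀)
    omega
  have hμN : μ ≤ N := le_trans (hμ i₀) (hN i₀)
  set P := univ.filter (fun i : ZMod m => a (i - 1) < a i ∧ a (i + 1) < a i) with hPdef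
  set T1 := Finset.Ico μ N with hT1def
  set T2 := (P.erase j₀).image (fun p => a p - 1) with hT2def
  have hT1card : T1.card = N - μ := Nat.card_Ico _ _
  have hT2T1 : T2 ⊆ T1 := by
    intro x hx
    obtain ⟨p, hp, rfl⟩ := Finset.mem_image.mp hx
    have hp' := Finset.mem_filter.mp (Finset.mem_of_mem_erase hp)
    have h1 := hμ (p + 1)
    have h2 := hN p
    exact Finset.mem_Ico.mpr ⟨by omega, by omega⟩
  have hT2card : T2.card = (P.erase j₀).card := by
    apply Finset.card_image_of_injOn
    intro p hp q hq hpq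
    have hp' := Finset.mem_filter.mp (Finset.mem_of_mem_erase hp)
    have hq' := Finset.mem_filter.mp (Finset.mem_of_mem_erase hq)
    have hpq' : a p - 1 = a q - 1 := hpq
    exact ha (by omega)
  have hu1 : ∀ t ∈ T1, 1 ≤ (univ.filter (fun i : ZMod m => a i ≤ t ∧ t < a (i + 1))).card := by
    intro t ht
    rw [hT1def, Finset.mem_Ico] at ht
    exact oneCross t i₀ j₀ (by omega) (by omega)
  have hu2 : ∀ t ∈ T2, 2 ≤ (univ.filter (fun i : ZMod m => a i ≤ t ∧ t < a (i + 1))).card := by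
    intro t ht
    obtain ⟨p, hp, rfl⟩ := Finset.mem_image.mp ht
    have hpne : p ≠ j₀ := Finset.ne_of_mem_erase hp
    have hp' := Finset.mem_filter.mp (Finset.mem_of_mem_erase hp)
    have hval : a p < a j₀ := by
      have h1 : a p ≤ a j₀ := by rw [← hj₀]; exact hN p
      have h2 : a p ≠ a j₀ := fun h => hpne (ha h)
      omega
    exact twoCross p j₀ hpne hp'.2.1 hp'.2.2 hval
  -- sum bound over T1
  have hsum1 : T1.card + T2.card ≤
      ∑ t ∈ T1, (univ.filter (fun i : ZMod m => a i ≤ t ∧ t < a (i + 1))).card := by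
    rw [← Finset.sum_sdiff hT2T1]
    have h1 : (T1 \ T2).card ≤ ∑ t ∈ T1 \ T2,
        (univ.filter (fun i : ZMod m => a i ≤ t ∧ t < a (i + 1))).card := by
      calc (T1 \ T2).card = ∑ _t ∈ T1 \ T2, 1 := by rw [Finset.sum_const, smul_eq_mul, mul_one]
        _ ≤ _ := Finset.sum_le_sum (fun t ht => hu1 t (Finset.mem_sdiff.mp ht).1)
    have h2 : 2 * T2.card ≤ ∑ t ∈ T2,
        (univ.filter (fun i : ZMod m => a i ≤ t ∧ t < a (i + 1))).card := by
      calc 2 * T2.card = ∑ _t ∈ T2, 2 := by rw [Finset.sum_const, smul_eq_mul, mul_comm]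
        _ ≤ _ := Finset.sum_le_sum (fun t ht => hu2 t ht)
    have h3 : (T1 \ T2).card = T1.card - T2.card := Finset.card_sdiff_of_subset hT2T1
    have h4 : T2.card ≤ T1.card := Finset.card_le_card hT2T1
    omega
  have hsum2 : ∑ t ∈ T1, (univ.filter (fun i : ZMod m => a i ≤ t ∧ t < a (i + 1))).card ≤
      ∑ t ∈ Finset.range N, (univ.filter (fun i : ZMod m => a i ≤ t ∧ t < a (i + 1))).card := by
    apply Finset.sum_le_sum_of_subset
    intro t ht
    rw [Finset.mem_Ico] at ht
    exact Finset.mem_range.mpr ht.2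
  have herase : P.card - 1 ≤ (P.erase j₀).card := Finset.pred_card_le_card_erase
  -- conclude
  have hkey := sumAbsEq N hN
  rw [hkey]
  have hz : ((T1.card + T2.card : ℕ) : ℤ) ≤
      ∑ t ∈ Finset.range N, ((univ.filter (fun i : ZMod m => a i ≤ t ∧ t < a (i + 1))).card : ℤ) := by
    rw [← Nat.cast_sum]
    exact_mod_cast le_trans hsum1 hsum2
  constructor
  · have hP1 : (P.card : ℤ) - 1 ≤ (T2.card : ℤ) := by
      rw [hT2card]
      push_cast
      omega
    have hm1 : (m : ℤ) - 1 ≤ (T1.card : ℤ) := by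
      rw [hT1card]
      push_cast
      omega
    push_cast at hz
    omega
  · have hm1 : (m : ℤ) - 1 ≤ (T1.card : ℤ) := by
      rw [hT1card]; push_cast; omega
    push_cast at hz
    omega


end Helpers

theorem stmt5 (m : ℕ) [NeZero m] (a : ZMod m → ℕ) (ha : Function.Injective a) :
    (∑ i : ZMod m, |(a i : ℤ) - (a (i + 1) : ℤ)|) ≥
      2 * ((m : ℤ) - 1) +
        2 * (((Finset.univ.filter
            (fun i : ZMod m => a (i - 1) < a i ∧ a (i + 1) < a i)).card : ℤ) - 1) ∧
    (∑ i : ZMod m, |(a i : ℤ) - (a (i + 1) : ℤ)|) ≥ 2 * ((m : ℤ) - 1) := by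
  refine main_aux a ha ?_ ?_ (sumAbsEq a)
  · intro t i0 j0 h0 h1
    exact oneCross a t i0 j0 h0 h1
  · intro p j0 h1 h2 h3 h4
    exact twoCross a ha p j0 h1 h2 h3 h4
end

section
/- For integers m > 1 and k ≥ 1, msum(mk+1, k) ≥ k/2. That is, for every permutation π of {1,...,mk+1}, the maximum cyclic k-consecutive sum of π is at least k(mk+2)/2 + k/2. -/
theorem stmt6 (m k : ℕ) (hm : 1 < m) (hk : 1 ≤ k) :
    (k : ℚ) / 2 ≤ msum (m * k + 1) k ∧
    ∀ π : Equiv.Perm (Fin (m * k + 1)),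
      (k : ℚ) * ((m : ℚ) * k + 2) / 2 + (k : ℚ) / 2 ≤ (maxksum (m * k + 1) k π : ℚ) := by
  set n := m * k + 1 with hn
  have hnpos : 0 < n := Nat.succ_pos _
  haveI : NeZero n := ⟨hnpos.ne'⟩
  have hnn : ∀ i : ℕ, i % n < n := fun i => Nat.mod_lt _ hnpos
  have key : ∀ π : Equiv.Perm (Fin n),
      (k : ℚ) * ((m : ℚ) * k + 2) / 2 + (k : ℚ) / 2 ≤ (maxksum n k π : ℚ) := by
    intro π
    set f : Fin n → ℕ := fun x => (π x : ℕ) + 1 with hf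
    set F : ℕ → ℕ := fun i => f ⟨i % n, hnn i⟩ with hF
    have hks : ∀ i, ksum n k π i = ∑ j ∈ Finset.range k, F (i + j) := by
      intro i
      unfold ksum
      refine Finset.sum_congr rfl fun j _ => ?_
      rw [dif_pos (hnn _)]
    -- ksum only depends on i % n
    have hper : ∀ i, ksum n k π i = ksum n k π (i % n) := by
      intro i
      rw [hks, hks]
      refine Finset.sum_congr rfl fun j _ => ?_
      show f _ = f _
      congr 1
      exact Fin.ext (Nat.mod_add_mod i n j).symm
    have hle : ∀ i, ksum n k π i ≤ maxksum n k π := by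
      intro i
      rw [hper]
      exact Finset.le_sup (Finset.mem_range.mpr (hnn i))
    -- cyclic full sum
    have hcyc : ∀ a : ℕ, ∑ r ∈ Finset.range n, F (a + r) = ∑ x : Fin n, f x := by
      intro a
      rw [← Fin.sum_univ_eq_sum_range (fun r => F (a + r)) n]
      have hbij : Function.Bijective (fun x : Fin n => (⟨(a + (x : ℕ)) % n, hnn _⟩ : Fin n)) := by
        rw [Fintype.bijective_iff_injective_and_card]
        refine ⟨fun x y hxy => ?_, rfl⟩
        have h1 : (a + (x : ℕ)) % n = (a + (y : ℕ)) % n := congrArg Fin.val hxy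
        have h2 : (x : ℕ) ≡ (y : ℕ) [MOD n] := Nat.ModEq.add_left_cancel' a h1
        have h3 : (x : ℕ) % n = (y : ℕ) % n := h2
        rw [Nat.mod_eq_of_lt x.isLt, Nat.mod_eq_of_lt y.isLt] at h3
        exact Fin.ext h3
      exact Fintype.sum_bijective _ hbij _ _ (fun x => rfl)
    -- window decomposition
    have hdec : ∀ (a M : ℕ), ∑ t ∈ Finset.range M, ksum n k π (a + t * k)
        = ∑ r ∈ Finset.range (M * k), F (a + r) := by
      intro a M
      induction M with
      | zero => simp
      | succ M ih =>
        rw [Finset.sum_range_succ, ih, Nat.succ_mul, Finset.sum_range_add, hks]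
        congr 1
        refine Finset.sum_congr rfl fun j _ => ?_
        congr 1
        omega
    -- total sum
    have htot : 2 * (∑ x : Fin n, f x) = n * (n + 1) := by
      have h1 : (∑ x : Fin n, f x) = (∑ x : Fin n, (π x : ℕ)) + n := by
        rw [Finset.sum_add_distrib]
        simp
      have h2 : (∑ x : Fin n, (π x : ℕ)) = ∑ i ∈ Finset.range n, i := by
        rw [Equiv.sum_comp π (fun x : Fin n => (x : ℕ))]
        exact Fin.sum_univ_eq_sum_range (fun i => i) n
      rw [h1, h2]
      obtain ⟨q, hq⟩ : ∃ q, n = q + 1 := ⟨m * k, hn⟩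
      rw [hq]
      have h3 := Finset.sum_range_id_mul_two (q + 1)
      simp only [Nat.add_sub_cancel] at h3
      calc 2 * ((∑ i ∈ Finset.range (q + 1), i) + (q + 1))
          = (∑ i ∈ Finset.range (q + 1), i) * 2 + 2 * (q + 1) := by ring
        _ = (q + 1) * q + 2 * (q + 1) := by rw [h3]
        _ = (q + 1) * ((q + 1) + 1) := by ring
    -- the position of value 1
    set p : Fin n := π.symm 0 with hp
    have hFp : F (p : ℕ) = 1 := by
      show f ⟨(p : ℕ) % n, _⟩ = 1
      have : (⟨(p : ℕ) % n, hnn _⟩ : Fin n) = p := Fin.ext (Nat.mod_eq_of_lt p.isLt)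
      rw [this, hf]
      simp [hp]
    -- sum of the m windows
    have hS : (∑ t ∈ Finset.range m, ksum n k π ((p : ℕ) + 1 + t * k)) + 1
        = ∑ x : Fin n, f x := by
      rw [hdec, ← hcyc (p : ℕ)]
      have : ∑ r ∈ Finset.range n, F ((p : ℕ) + r)
          = (∑ r ∈ Finset.range (m * k), F ((p : ℕ) + (r + 1))) + F ((p : ℕ) + 0) :=
        Finset.sum_range_succ' (fun r => F ((p : ℕ) + r)) (m * k)
      rw [this]
      have h0 : F ((p : ℕ) + 0) = 1 := by rw [Nat.add_zero, hFp]
      rw [h0]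
      congr 1
      refine Finset.sum_congr rfl fun r _ => ?_
      congr 1
      omega
    -- bound the sum by m * maxksum
    have hSle : (∑ t ∈ Finset.range m, ksum n k π ((p : ℕ) + 1 + t * k))
        ≤ m * maxksum n k π := by
      calc (∑ t ∈ Finset.range m, ksum n k π ((p : ℕ) + 1 + t * k))
          ≤ ∑ t ∈ Finset.range m, maxksum n k π :=
            Finset.sum_le_sum fun t _ => hle _
        _ = m * maxksum n k π := by rw [Finset.sum_const, Finset.card_range, smul_eq_mul]
    -- combine in ℕ
    have hnat : n * (n + 1) ≤ 2 * (m * maxksum n k π) + 2 := by omega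
    -- pass to ℚ
    have hq : ((n : ℚ)) * ((n : ℚ) + 1) ≤ 2 * ((m : ℚ) * (maxksum n k π : ℚ)) + 2 := by
      exact_mod_cast hnat
    have hnq : (n : ℚ) = (m : ℚ) * (k : ℚ) + 1 := by rw [hn]; push_cast; ring
    have hmq : (2 : ℚ) ≤ (m : ℚ) := by exact_mod_cast hm
    have hkq : (1 : ℚ) ≤ (k : ℚ) := by exact_mod_cast hk
    rw [hnq] at hq
    nlinarith [hq, hmq, hkq, mul_pos (lt_of_lt_of_le two_pos hmq) (lt_of_lt_of_le one_pos hkq)]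
  refine ⟨?_, key⟩
  apply Finset.le_inf'
  intro π _
  have h1 := key π
  have h2 : ((n : ℚ) + 1) = (m : ℚ) * (k : ℚ) + 2 := by rw [hn]; push_cast; ring
  rw [h2]
  linarith
end

section
/- For integers m > 1 and k ≥ 1, msum(mk, k) ≥ 1 − 1/m. That is, for every permutation π of {1,...,mk}, the maximum cyclic k-consecutive sum of π is at least k(mk+1)/2 + (m−1)/m. -/
namespace Stmt8

open Finset

variable {n k : ℕ}

def sig (hn : 0 < n) (π : Equiv.Perm (Fin n)) (i : ℕ) : ℕ :=
  (π ⟨i % n, Nat.mod_lt i hn⟩ : ℕ) + 1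

lemma sig_congr (hn : 0 < n) (π : Equiv.Perm (Fin n)) {a b : ℕ} (h : a % n = b % n) :
    sig hn π a = sig hn π b := by
  have h2 : (⟨a % n, Nat.mod_lt a hn⟩ : Fin n) = ⟨b % n, Nat.mod_lt b hn⟩ := Fin.ext h
  unfold sig
  rw [h2]

lemma sig_inj (hn : 0 < n) (π : Equiv.Perm (Fin n)) {a b : ℕ}
    (h : sig hn π a = sig hn π b) : a % n = b % n := by
  unfold sig at h
  have h2 : π ⟨a % n, Nat.mod_lt a hn⟩ = π ⟨b % n, Nat.mod_lt b hn⟩ :=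
    Fin.ext (Nat.succ_injective h)
  have := π.injective h2
  exact congrArg Fin.val this

lemma ksum_eq (hn : 0 < n) (π : Equiv.Perm (Fin n)) (i : ℕ) :
    ksum n k π i = ∑ j ∈ Finset.range k, sig hn π (i + j) := by
  unfold ksum sig
  refine Finset.sum_congr rfl fun j _ => ?_
  rw [dif_pos (Nat.mod_lt _ hn)]

lemma ksum_congr (hn : 0 < n) (π : Equiv.Perm (Fin n)) {a b : ℕ} (h : a % n = b % n) :
    ksum n k π a = ksum n k π b := by
  rw [ksum_eq hn, ksum_eq hn]
  refine Finset.sum_congr rfl fun j _ => sig_congr hn π ?_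
  rw [← Nat.mod_add_mod, h, Nat.mod_add_mod]

lemma rot1 (hn : 0 < n) (π : Equiv.Perm (Fin n)) (c : ℕ) :
    ∑ i ∈ range n, sig hn π (i + (c + 1)) = ∑ i ∈ range n, sig hn π (i + c) := by
  obtain ⟨n', rfl⟩ : ∃ n', n = n' + 1 := ⟨n - 1, by omega⟩
  rw [Finset.sum_range_succ, Finset.sum_range_succ']
  have h1 : sig hn π (n' + (c + 1)) = sig hn π (0 + c) := by
    apply sig_congr
    have : n' + (c + 1) = (n' + 1) + c := by ring
    rw [this, Nat.add_mod_left, Nat.zero_add]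
  rw [h1]
  have h2 : ∀ i, sig hn π (i + 1 + c) = sig hn π (i + (c + 1)) := fun i => by
    apply sig_congr; congr 1; ring
  simp only [h2]

lemma rot (hn : 0 < n) (π : Equiv.Perm (Fin n)) (c : ℕ) :
    ∑ i ∈ range n, sig hn π (i + c) = ∑ i ∈ range n, sig hn π i := by
  induction c with
  | zero => simp
  | succ c ih => rw [rot1 hn π c, ih]

lemma two_sum_sig (hn : 0 < n) (π : Equiv.Perm (Fin n)) :
    2 * ∑ i ∈ range n, sig hn π i = n * (n + 1) := by
  have h1 : ∑ i ∈ range n, sig hn π i = ∑ x : Fin n, ((π x : ℕ) + 1) := by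
    rw [← Fin.sum_univ_eq_sum_range (fun i => sig hn π i) n]
    refine Finset.sum_congr rfl fun x _ => ?_
    have hx : (⟨(x : ℕ) % n, Nat.mod_lt (x : ℕ) hn⟩ : Fin n) = x :=
      Fin.ext (Nat.mod_eq_of_lt x.isLt)
    unfold sig
    rw [hx]
  have h2 : ∑ x : Fin n, ((π x : ℕ) + 1) = ∑ x : Fin n, ((x : ℕ) + 1) :=
    Equiv.sum_comp π (fun x : Fin n => (x : ℕ) + 1)
  have h3 : ∑ x : Fin n, ((x : ℕ) + 1) = ∑ i ∈ range n, (i + 1) :=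
    Fin.sum_univ_eq_sum_range (fun i => i + 1) n
  have h4 : ∑ i ∈ range (n + 1), i = ∑ i ∈ range n, (i + 1) := by
    rw [Finset.sum_range_succ' (fun j => j) n]
    omega
  have h5 : (∑ i ∈ range (n + 1), i) * 2 = (n + 1) * n := Finset.sum_range_id_mul_two (n + 1)
  rw [h1, h2, h3, ← h4, mul_comm 2, h5, mul_comm]

lemma sum_blocks {M : Type*} [AddCommMonoid M] (f : ℕ → M) (m : ℕ) :
    ∑ r ∈ range m, ∑ j ∈ range k, f (r * k + j) = ∑ l ∈ range (m * k), f l := by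
  induction m with
  | zero => simp
  | succ m ih =>
    rw [Finset.sum_range_succ, ih, Nat.succ_mul, Finset.sum_range_add]

lemma class_sum_nat (hn : 0 < n) (π : Equiv.Perm (Fin n)) {m : ℕ} (hmk : n = m * k) (c : ℕ) :
    2 * ∑ r ∈ range m, ksum n k π (c + r * k) = n * (n + 1) := by
  have h1 : ∑ r ∈ range m, ksum n k π (c + r * k) = ∑ l ∈ range (m * k), sig hn π (c + l) := by
    rw [← sum_blocks (fun l => sig hn π (c + l)) m]
    refine Finset.sum_congr rfl fun r _ => ?_
    rw [ksum_eq hn]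
    refine Finset.sum_congr rfl fun j _ => ?_
    congr 1
    ring
  rw [h1, ← hmk]
  have h2 : ∀ l, sig hn π (c + l) = sig hn π (l + c) := fun l => by rw [Nat.add_comm]
  simp only [h2]
  rw [rot hn π c]
  exact two_sum_sig hn π

lemma full_sum_nat (hn : 0 < n) (π : Equiv.Perm (Fin n)) (a : ℕ) :
    2 * ∑ i ∈ range n, ksum n k π (i + a) = k * (n * (n + 1)) := by
  have h1 : ∑ i ∈ range n, ksum n k π (i + a) =
      ∑ j ∈ range k, ∑ i ∈ range n, sig hn π (i + (a + j)) := by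
    simp only [ksum_eq hn]
    rw [Finset.sum_comm]
    refine Finset.sum_congr rfl fun j _ => Finset.sum_congr rfl fun i _ => ?_
    congr 1
    ring
  rw [h1, Finset.mul_sum]
  have : ∀ j ∈ range k, 2 * ∑ i ∈ range n, sig hn π (i + (a + j)) = n * (n + 1) := by
    intro j _
    rw [rot hn π, two_sum_sig hn π]
  rw [Finset.sum_congr rfl this]
  simp [Finset.sum_const, mul_comm]

lemma step_nat (hn : 0 < n) (π : Equiv.Perm (Fin n)) (i : ℕ) :
    ksum n k π (i + 1) + sig hn π i = ksum n k π i + sig hn π (i + k) := by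
  have h1 : ∑ j ∈ range (k + 1), sig hn π (i + j) =
      ∑ j ∈ range k, sig hn π (i + (j + 1)) + sig hn π (i + 0) :=
    Finset.sum_range_succ' (fun j => sig hn π (i + j)) k
  have h2 : ∑ j ∈ range (k + 1), sig hn π (i + j) =
      ∑ j ∈ range k, sig hn π (i + j) + sig hn π (i + k) :=
    Finset.sum_range_succ (fun j => sig hn π (i + j)) k
  have h3 : ∀ j, sig hn π (i + (j + 1)) = sig hn π (i + 1 + j) := fun j => by
    congr 1; ring
  simp only [h3] at h1
  rw [ksum_eq hn, ksum_eq hn]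
  simp only [Nat.add_zero] at h1
  omega


/-- centered doubled window sum -/
def tt (n k : ℕ) (π : Equiv.Perm (Fin n)) (i : ℕ) : ℤ :=
  2 * (ksum n k π i : ℤ) - (k : ℤ) * ((n : ℤ) + 1)

lemma tt_congr (hn : 0 < n) (π : Equiv.Perm (Fin n)) {a b : ℕ} (h : a % n = b % n) :
    tt n k π a = tt n k π b := by
  unfold tt
  rw [ksum_congr hn π h]

lemma tt_class (hn : 0 < n) (π : Equiv.Perm (Fin n)) {m : ℕ} (hmk : n = m * k) (c : ℕ) :
    ∑ r ∈ range m, tt n k π (c + r * k) = 0 := by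
  have h1 : (2 : ℤ) * ∑ r ∈ range m, (ksum n k π (c + r * k) : ℤ) = (n : ℤ) * ((n : ℤ) + 1) := by
    exact_mod_cast class_sum_nat hn π hmk c
  have h2 : (m : ℤ) * k = n := by exact_mod_cast hmk.symm
  unfold tt
  rw [Finset.sum_sub_distrib, Finset.sum_const, card_range, nsmul_eq_mul, ← Finset.mul_sum]
  linear_combination h1 - ((n : ℤ) + 1) * h2

lemma tt_full (hn : 0 < n) (π : Equiv.Perm (Fin n)) (a : ℕ) :
    ∑ i ∈ range n, tt n k π (i + a) = 0 := by
  have h1 : (2 : ℤ) * ∑ i ∈ range n, (ksum n k π (i + a) : ℤ) = (k : ℤ) * ((n : ℤ) * ((n : ℤ) + 1)) := by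
    exact_mod_cast full_sum_nat hn π a
  unfold tt
  rw [Finset.sum_sub_distrib, Finset.sum_const, card_range, nsmul_eq_mul, ← Finset.mul_sum]
  linear_combination h1

lemma tt_step (hn : 0 < n) (π : Equiv.Perm (Fin n)) (i : ℕ) :
    tt n k π (i + 1) - tt n k π i = 2 * ((sig hn π (i + k) : ℤ) - (sig hn π i : ℤ)) := by
  have h := step_nat (k := k) hn π i
  have h' : (ksum n k π (i + 1) : ℤ) + sig hn π i = (ksum n k π i : ℤ) + sig hn π (i + k) := by
    exact_mod_cast h
  unfold tt
  linarith

lemma sig_shift_false (hn : 0 < n) (π : Equiv.Perm (Fin n)) {d : ℕ} (hd : 0 < d) (hdn : d < n)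
    (i : ℕ) (h : sig hn π (i + d) = sig hn π i) : False := by
  have h1 : (i + d) % n = (i + 0) % n := by simpa using sig_inj hn π h
  have h2 : d ≡ 0 [MOD n] := Nat.ModEq.add_left_cancel' i h1
  have h3 : n ∣ d := (Nat.modEq_zero_iff_dvd).mp h2
  exact absurd (Nat.le_of_dvd hd h3) (by omega)

lemma no_nonpos (hn : 0 < n) (π : Equiv.Perm (Fin n)) {m : ℕ} (hmk : n = m * k)
    (hm : 1 < m) (hk : 1 ≤ k) (h : ∀ i, tt n k π i ≤ 0) : False := by
  have hz : ∀ c, tt n k π c = 0 := by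
    intro c
    have hc := tt_class hn π hmk c
    have h0 := (Finset.sum_eq_zero_iff_of_nonpos (fun r _ => h (c + r * k))).mp hc 0
      (mem_range.mpr (by omega))
    simpa using h0
  have hstep := tt_step (k := k) hn π 0
  rw [hz 1, hz 0] at hstep
  have hsig : (sig hn π (0 + k) : ℤ) = (sig hn π 0 : ℤ) := by linarith
  have hsig' : sig hn π (0 + k) = sig hn π 0 := by exact_mod_cast hsig
  have hkn : k < n := by nlinarith
  exact sig_shift_false hn π (by omega) hkn 0 hsig'

lemma key {m : ℕ} (hm : 1 < m) (hk : 1 ≤ k) (hmk : n = m * k) (π : Equiv.Perm (Fin n)) :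
    (k : ℚ) * ((n : ℚ) + 1) / 2 + ((m : ℚ) - 1) / m ≤ (maxksum n k π : ℚ) := by
  have hn : 0 < n := by nlinarith
  by_contra hcon
  push_neg at hcon
  set M := maxksum n k π with hM
  have hm0 : (0 : ℚ) < m := by positivity
  -- integer form of the assumption
  have hZQ : (m : ℚ) * (2 * M) < m * ((k : ℚ) * ((n : ℚ) + 1)) + 2 * m - 2 := by
    have h2 : (M : ℚ) * (2 * m) < ((k : ℚ) * ((n : ℚ) + 1) / 2 + ((m : ℚ) - 1) / m) * (2 * m) :=
      mul_lt_mul_of_pos_right hcon (by positivity)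
    have h3 : ((k : ℚ) * ((n : ℚ) + 1) / 2 + ((m : ℚ) - 1) / m) * (2 * m)
        = (m : ℚ) * ((k : ℚ) * ((n : ℚ) + 1)) + 2 * m - 2 := by
      field_simp
      ring
    rw [h3] at h2
    linarith
  have hZ : (m : ℤ) * (2 * M) < m * ((k : ℤ) * ((n : ℤ) + 1)) + 2 * m - 2 := by
    exact_mod_cast hZQ
  set T : ℤ := 2 * (M : ℤ) - (k : ℤ) * ((n : ℤ) + 1) with hTdef
  have hmT : (m : ℤ) * T ≤ 2 * m - 3 := by
    have he : (m : ℤ) * T = m * (2 * M) - m * ((k : ℤ) * ((n : ℤ) + 1)) := by rw [hTdef]; ring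
    have h4 : (m : ℤ) * T < 2 * m - 2 := by linarith
    linarith [Int.lt_iff_add_one_le.mp h4]
  have hT1 : T ≤ 1 := by
    by_contra hc2
    push_neg at hc2
    have h5 : (m : ℤ) * 2 ≤ m * T := by
      apply mul_le_mul_of_nonneg_left (by omega) (by positivity)
    have hm2 : (2 : ℤ) ≤ m := by exact_mod_cast hm
    nlinarith
  have hTle : ∀ i, tt n k π i ≤ T := by
    intro i
    have h1 : ksum n k π i = ksum n k π (i % n) :=
      ksum_congr hn π (Nat.mod_mod_of_dvd i dvd_rfl).symm
    have h2 : ksum n k π (i % n) ≤ M :=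
      Finset.le_sup (Finset.mem_range.mpr (Nat.mod_lt i hn))
    unfold tt
    rw [hTdef, h1]
    have : (ksum n k π (i % n) : ℤ) ≤ (M : ℤ) := by exact_mod_cast h2
    linarith
  rcases Nat.even_or_odd (k * (n + 1)) with he | ho
  · -- even case
    obtain ⟨e, he⟩ := he
    have hke : (k : ℤ) * ((n : ℤ) + 1) = (e : ℤ) + e := by exact_mod_cast he
    have hT0 : T ≤ 0 := by omega
    exact no_nonpos hn π hmk hm hk (fun i => le_trans (hTle i) hT0)
  · obtain ⟨e, ho⟩ := ho
    have hke : (k : ℤ) * ((n : ℤ) + 1) = 2 * (e : ℤ) + 1 := by exact_mod_cast ho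
    have hkodd : k % 2 = 1 := by
      have hodk : Odd k := (Nat.odd_mul.mp ⟨e, ho⟩).1
      exact Nat.odd_iff.mp hodk
    rcases le_or_gt T 0 with hT0 | hT0
    · exact no_nonpos hn π hmk hm hk (fun i => le_trans (hTle i) hT0)
    have hT1' : T = 1 := by omega
    have hm3 : 3 ≤ m := by
      rw [hT1', mul_one] at hmT
      have : (3 : ℤ) ≤ m := by omega
      exact_mod_cast this
    have hodd : ∀ i, tt n k π i % 2 = 1 := by
      intro i
      have h6 : tt n k π i = 2 * (ksum n k π i : ℤ) - (2 * (e : ℤ) + 1) := by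
        unfold tt
        rw [hke]
      omega
    have hpair : ∀ i, tt n k π i + tt n k π (i + 1) ≤ 0 := by
      intro i
      by_contra hc2
      push_neg at hc2
      have h1 := hodd i
      have h2 := hodd (i + 1)
      have h3 := hTle i
      have h4 := hTle (i + 1)
      rw [hT1'] at h3 h4
      have hii : tt n k π i = 1 ∧ tt n k π (i + 1) = 1 := by omega
      have hst := tt_step (k := k) hn π i
      rw [hii.1, hii.2] at hst
      have hsig : (sig hn π (i + k) : ℤ) = (sig hn π i : ℤ) := by linarith
      have hsig' : sig hn π (i + k) = sig hn π i := by exact_mod_cast hsig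
      have hkn : k < n := by nlinarith
      exact sig_shift_false hn π (by omega) hkn i hsig'
    have hsum0 : ∑ i ∈ range n, (tt n k π i + tt n k π (i + 1)) = 0 := by
      rw [Finset.sum_add_distrib]
      have e0 := tt_full (k := k) hn π 0
      have e1 := tt_full (k := k) hn π 1
      simp only [Nat.add_zero] at e0
      rw [e0, e1]
      ring
    have hpair0 : ∀ i, tt n k π i + tt n k π (i + 1) = 0 := by
      intro i
      have hin : i % n ∈ range n := mem_range.mpr (Nat.mod_lt i hn)
      have h7 := (Finset.sum_eq_zero_iff_of_nonpos (fun j _ => hpair j)).mp hsum0 (i % n) hin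
      have c1 : tt n k π (i % n) = tt n k π i :=
        tt_congr hn π (Nat.mod_mod_of_dvd i dvd_rfl)
      have c2 : tt n k π (i % n + 1) = tt n k π (i + 1) :=
        tt_congr hn π (Nat.mod_add_mod i n 1)
      rw [c1, c2] at h7
      exact h7
    have hflip : ∀ i, tt n k π (i + 1) = -tt n k π i := by
      intro i
      have := hpair0 i
      linarith
    have hper2 : ∀ i, tt n k π (i + 2) = tt n k π i := by
      intro i
      have h1 := hflip i
      have h2 := hflip (i + 1)
      have : i + 2 = (i + 1) + 1 := rfl
      rw [this, h2, h1, neg_neg]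
    have hper2j : ∀ j i, tt n k π (i + 2 * j) = tt n k π i := by
      intro j
      induction j with
      | zero => intro i; simp
      | succ j ih =>
        intro i
        have h8 : i + 2 * (j + 1) = (i + 2 * j) + 2 := by ring
        rw [h8, hper2, ih]
    obtain ⟨j, hj⟩ : ∃ j, k = 2 * j + 1 := ⟨k / 2, by omega⟩
    have hs1 := tt_step (k := k) hn π 0
    have hs2 := tt_step (k := k) hn π k
    have ha : tt n k π k = tt n k π 1 := by
      have h9 := hper2j j 1
      rw [show 1 + 2 * j = k by omega] at h9
      exact h9
    have hb : tt n k π (k + 1) = tt n k π 0 := by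
      have h9 := hper2j (j + 1) 0
      rw [show 0 + 2 * (j + 1) = k + 1 by omega] at h9
      exact h9
    rw [ha, hb] at hs2
    simp only [Nat.zero_add] at hs1
    have hsig : (sig hn π (k + k) : ℤ) = (sig hn π 0 : ℤ) := by linarith only [hs1, hs2]
    have hsig' : sig hn π (0 + (k + k)) = sig hn π 0 := by
      rw [Nat.zero_add]
      exact_mod_cast hsig
    have hkk : k + k < n := by nlinarith
    exact sig_shift_false hn π (by omega) hkk 0 hsig'


end Stmt8

theorem stmt8 (m k : ℕ) (hm : 1 < m) (hk : 1 ≤ k) :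
    1 - 1 / (m : ℚ) ≤ msum (m * k) k ∧
    ∀ π : Equiv.Perm (Fin (m * k)),
      (k : ℚ) * ((m : ℚ) * k + 1) / 2 + ((m : ℚ) - 1) / m ≤ (maxksum (m * k) k π : ℚ) := by
  have hk0 : 0 < k := hk
  have key2 : ∀ π : Equiv.Perm (Fin (m * k)),
      (k : ℚ) * ((m : ℚ) * k + 1) / 2 + ((m : ℚ) - 1) / m ≤ (maxksum (m * k) k π : ℚ) := by
    intro π
    have h := Stmt8.key hm hk rfl π
    have hc : ((m * k : ℕ) : ℚ) = (m : ℚ) * k := by push_cast; ring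
    rw [hc] at h
    exact h
  refine ⟨?_, key2⟩
  unfold msum
  apply Finset.le_inf'
  intro π _
  have h := key2 π
  have hm0 : (m : ℚ) ≠ 0 := Nat.cast_ne_zero.mpr (by omega)
  have hid : ((m : ℚ) - 1) / m = 1 - 1 / m := by field_simp
  have hc : ((m * k : ℕ) : ℚ) = (m : ℚ) * k := by push_cast; ring
  rw [hc]
  linarith [h, hid]
end

section
/- Let m and k be odd integers with k ≥ 3 and m ≥ 2k+3. Then msum(mk, k) ≥ 2; equivalently, for every permutation π of {1,...,mk} there exists an index i such that the cyclic k-consecutive sum s_i ≥ k(mk+1)/2 + 2. -/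
open Finset

private lemma per_mul {f : ℕ → ℤ} {n : ℕ} (hf : ∀ i, f (i + n) = f i) :
    ∀ t x, f (x + n * t) = f x := by
  intro t
  induction t with
  | zero => simp
  | succ t ih =>
    intro x
    have h : x + n * (t + 1) = (x + n * t) + n := by ring
    rw [h, hf, ih]

private lemma per_mod {f : ℕ → ℤ} {n : ℕ} (hf : ∀ i, f (i + n) = f i) :
    ∀ a b, f (a % n + b) = f (a + b) := by
  intro a b
  have h := Nat.div_add_mod a n
  have h2 : a + b = (a % n + b) + n * (a / n) := by omega
  rw [h2, per_mul hf]

private lemma sum_shift {f : ℕ → ℤ} {n : ℕ} (hf : ∀ i, f (i + n) = f i) :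
    ∀ i0, ∑ x ∈ range n, f (i0 + x) = ∑ x ∈ range n, f x := by
  intro i0
  induction i0 with
  | zero => simp
  | succ i ih =>
    have A := Finset.sum_range_succ' (fun x => f (i + x)) n
    have B := Finset.sum_range_succ (fun x => f (i + x)) n
    have C : ∑ x ∈ range n, f (i + 1 + x) = ∑ x ∈ range n, f (i + (x + 1)) :=
      Finset.sum_congr rfl fun x _ => by rw [show i + 1 + x = i + (x + 1) by omega]
    have D := hf i
    rw [← ih, C]
    simp only [add_zero] at A
    linarith [A, B]

private lemma sum_blocks (g : ℕ → ℤ) (M K : ℕ) :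
    ∑ t ∈ range (M * K), g t = ∑ j ∈ range M, ∑ c ∈ range K, g (j * K + c) := by
  induction M with
  | zero => simp
  | succ M ih =>
    have h1 : ∑ t ∈ Finset.Ico 0 (M * K), g t + ∑ t ∈ Finset.Ico (M * K) (M * K + K), g t
        = ∑ t ∈ Finset.Ico 0 (M * K + K), g t :=
      Finset.sum_Ico_consecutive g (Nat.zero_le (M * K)) (Nat.le_add_right (M * K) K)
    have h2 : ∑ t ∈ Finset.Ico (M * K) (M * K + K), g t = ∑ c ∈ range K, g (M * K + c) := by
      rw [Finset.sum_Ico_eq_sum_range, Nat.add_sub_cancel_left]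
    rw [show (M + 1) * K = M * K + K by ring, Finset.sum_range_succ, ← ih,
      Finset.range_eq_Ico, ← h1, h2, ← Finset.range_eq_Ico]

private lemma walk_lemma (M : ℕ) (hM : 3 ≤ M) (v : ℕ → ℤ)
    (hper : ∀ j, v (j + M) = v j)
    (hinj : ∀ j, j < M → ∀ j', j' < M → v j = v j' → j = j') :
    1 ≤ ((range M).filter (fun j => v (j + 1) < v j ∧ v (j + (M - 1)) < v j)).card ∧
      2 * M + 2 * ((range M).filter (fun j => v (j + 1) < v j ∧ v (j + (M - 1)) < v j)).card ≤
        (∑ j ∈ range M, (v (j + 1) - v j).natAbs) + 4 := by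
  classical
  have hM0 : 0 < M := by omega
  have hmod : ∀ j, v (j % M) = v j := fun j => by
    have := per_mod (f := v) hper j 0
    simpa using this
  have hshift : ∀ a b, v (a % M + b) = v (a + b) := per_mod hper
  have hinj' : ∀ a b, v a = v b → a % M = b % M := by
    intro a b h
    exact hinj _ (Nat.mod_lt _ hM0) _ (Nat.mod_lt _ hM0) (by rw [hmod, hmod]; exact h)
  have hdvd : ∀ a d, (a + d) % M = a % M → M ∣ d := by
    intro a d h
    have h1 : a ≡ a + d [MOD M] := h.symm
    have h2 := (Nat.modEq_iff_dvd' (Nat.le_add_right a d)).mp h1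
    simpa using h2
  set img := (range M).image v with himg_def
  have himg : img.Nonempty := ⟨v 0, mem_image_of_mem v (mem_range.mpr hM0)⟩
  set hi := img.max' himg with hhi
  set lo := img.min' himg with hlo
  obtain ⟨jm, hjmM, hjm⟩ : ∃ jm, jm < M ∧ v jm = hi := by
    obtain ⟨j, hj, hv⟩ := Finset.mem_image.mp (img.max'_mem himg)
    exact ⟨j, mem_range.mp hj, hv⟩
  obtain ⟨jl, hjlM, hjl⟩ : ∃ jl, jl < M ∧ v jl = lo := by
    obtain ⟨j, hj, hv⟩ := Finset.mem_image.mp (img.min'_mem himg)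
    exact ⟨j, mem_range.mp hj, hv⟩
  have hle : ∀ j, v j ≤ hi := by
    intro j; rw [← hmod j]
    exact Finset.le_max' _ _ (mem_image_of_mem v (mem_range.mpr (Nat.mod_lt _ hM0)))
  have hge : ∀ j, lo ≤ v j := by
    intro j; rw [← hmod j]
    exact Finset.min'_le _ _ (mem_image_of_mem v (mem_range.mpr (Nat.mod_lt _ hM0)))
  have hlohi : lo ≤ hi := hjm ▸ hge jm
  have hMR : (M : ℤ) ≤ hi - lo + 1 := by
    have h1 : img ⊆ Finset.Icc lo hi := fun x hx =>
      Finset.mem_Icc.mpr ⟨Finset.min'_le _ _ hx, Finset.le_max' _ _ hx⟩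
    have h2 : img.card = M := by
      rw [himg_def, Finset.card_image_of_injOn, Finset.card_range]
      intro x hx y hy hxy
      exact hinj _ (mem_range.mp hx) _ (mem_range.mp hy) hxy
    have h3 := Finset.card_le_card h1
    rw [h2, Int.card_Icc] at h3
    omega
  -- crossing counting
  have step_card : ∀ j, (v (j + 1) - v j).natAbs =
      ((Finset.Ico lo hi).filter
        (fun c => (v j ≤ c ∧ c < v (j + 1)) ∨ (v (j + 1) ≤ c ∧ c < v j))).card := by
    intro j
    have hset : (Finset.Ico lo hi).filter
        (fun c => (v j ≤ c ∧ c < v (j + 1)) ∨ (v (j + 1) ≤ c ∧ c < v j))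
        = Finset.Ico (min (v j) (v (j + 1))) (max (v j) (v (j + 1))) := by
      ext c
      simp only [Finset.mem_filter, Finset.mem_Ico]
      constructor
      · rintro ⟨-, h | h⟩
        · exact ⟨le_trans (min_le_left _ _) h.1, lt_of_lt_of_le h.2 (le_max_right _ _)⟩
        · exact ⟨le_trans (min_le_right _ _) h.1, lt_of_lt_of_le h.2 (le_max_left _ _)⟩
      · rintro ⟨h1, h2⟩
        refine ⟨⟨le_trans (le_min (hge _) (hge _)) h1, lt_of_lt_of_le h2 (max_le (hle _) (hle _))⟩, ?_⟩
        rcases le_total (v j) (v (j + 1)) with h | h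
        · rw [min_eq_left h] at h1; rw [max_eq_right h] at h2; exact Or.inl ⟨h1, h2⟩
        · rw [min_eq_right h] at h1; rw [max_eq_left h] at h2; exact Or.inr ⟨h1, h2⟩
    rw [hset, Int.card_Ico]
    rcases le_total (v j) (v (j + 1)) with h | h
    · rw [min_eq_left h, max_eq_right h]; omega
    · rw [min_eq_right h, max_eq_left h]; omega
  have Tsum : (∑ j ∈ range M, (v (j + 1) - v j).natAbs)
      = ∑ c ∈ Finset.Ico lo hi, ((range M).filter
          (fun j => (v j ≤ c ∧ c < v (j + 1)) ∨ (v (j + 1) ≤ c ∧ c < v j))).card := by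
    calc ∑ j ∈ range M, (v (j + 1) - v j).natAbs
        = ∑ j ∈ range M, ∑ c ∈ Finset.Ico lo hi,
            (if (v j ≤ c ∧ c < v (j + 1)) ∨ (v (j + 1) ≤ c ∧ c < v j) then 1 else 0) := by
          refine Finset.sum_congr rfl fun j _ => ?_
          rw [step_card j, Finset.card_filter]
      _ = ∑ c ∈ Finset.Ico lo hi, ∑ j ∈ range M,
            (if (v j ≤ c ∧ c < v (j + 1)) ∨ (v (j + 1) ≤ c ∧ c < v j) then 1 else 0) :=
          Finset.sum_comm
      _ = _ := Finset.sum_congr rfl fun c _ => (Finset.card_filter _ _).symm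
  have reach_up : ∀ c, lo ≤ c → c < hi → ∃ j, j < M ∧ v j ≤ c ∧ c < v (j + 1) := by
    intro c hc1 hc2
    by_contra hno
    push_neg at hno
    have hcl : ∀ j, v j ≤ c → v (j + 1) ≤ c := by
      intro j hj
      have h1 := hno (j % M) (Nat.mod_lt _ hM0)
      rw [hmod] at h1
      have h2 := h1 hj
      rwa [hshift j 1] at h2
    have hind : ∀ t, v (jl + t) ≤ c := by
      intro t; induction t with
      | zero => simpa [hjl] using hc1
      | succ t ih =>
        rw [show jl + (t + 1) = (jl + t) + 1 by omega]
        exact hcl _ ih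
    have hfin := hind (jm + (M - jl))
    rw [show jl + (jm + (M - jl)) = jm + M by omega, hper, hjm] at hfin
    omega
  have reach_dn : ∀ c, lo ≤ c → c < hi → ∃ j, j < M ∧ v (j + 1) ≤ c ∧ c < v j := by
    intro c hc1 hc2
    by_contra hno
    push_neg at hno
    have hcl : ∀ j, c < v j → c < v (j + 1) := by
      intro j hj
      by_contra hle'
      push_neg at hle'
      have h1 := hno (j % M) (Nat.mod_lt _ hM0)
      rw [hmod] at h1
      rw [hshift j 1] at h1
      exact absurd hj (not_lt.mpr (h1 hle'))
    have hind : ∀ t, c < v (jm + t) := by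
      intro t; induction t with
      | zero => simpa [hjm] using hc2
      | succ t ih =>
        rw [show jm + (t + 1) = (jm + t) + 1 by omega]
        exact hcl _ ih
    have hfin := hind (jl + (M - jm))
    rw [show jm + (jl + (M - jm)) = jl + M by omega, hper, hjl] at hfin
    omega
  have spec_bound : ∀ j, j < M → v (j + 1) < v j → v (j + (M - 1)) < v j → v j ≠ hi →
      4 ≤ ((range M).filter
        (fun t => (v t ≤ v j - 1 ∧ v j - 1 < v (t + 1)) ∨ (v (t + 1) ≤ v j - 1 ∧ v j - 1 < v t))).card := by
    intro j hjM hlm1 hlm2 hne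
    set c := v j - 1 with hc
    have hc3 : c < v j := by omega
    have hc1 : v (j + 1) ≤ c := by omega
    have hc2 : v (j + (M - 1)) ≤ c := by omega
    have hchi : c < hi := lt_of_lt_of_le hc3 (hle j)
    have hclo : lo ≤ c := le_trans (hge (j + 1)) hc1
    -- first up-crossing
    set u1 := (j + (M - 1)) % M with hu1_def
    have hu1a : v u1 ≤ c := by rw [hu1_def, hmod]; exact hc2
    have hu1b : c < v (u1 + 1) := by
      rw [hu1_def, hshift (j + (M - 1)) 1, show j + (M - 1) + 1 = j + M by omega, hper]
      exact hc3
    have hu1M : u1 < M := Nat.mod_lt _ hM0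
    -- second up-crossing
    have hQex : ∃ d, v (jm + M - (d + 1)) ≤ c := by
      refine ⟨jm + M - jl - 1, ?_⟩
      rw [show jm + M - (jm + M - jl - 1 + 1) = jl by omega, hjl]
      exact hclo
    set d1 := Nat.find hQex with hd1
    have hQ1 : v (jm + M - (d1 + 1)) ≤ c := Nat.find_spec hQex
    have hQmin : ∀ d, d < d1 → c < v (jm + M - (d + 1)) := by
      intro d hd
      exact not_le.mp (Nat.find_min hQex hd)
    have hd1b : d1 + 1 ≤ jm + M := by
      have hw : v (jm + M - ((jm + M - jl - 1) + 1)) ≤ c := by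
        rw [show jm + M - ((jm + M - jl - 1) + 1) = jl by omega, hjl]
        exact hclo
      have := Nat.find_min' hQex hw
      omega
    set u2 := (jm + M - (d1 + 1)) % M with hu2_def
    have hu2a : v u2 ≤ c := by rw [hu2_def, hmod]; exact hQ1
    have hu2b : c < v (u2 + 1) := by
      rw [hu2_def, hshift _ 1, show jm + M - (d1 + 1) + 1 = jm + M - d1 by omega]
      rcases Nat.eq_zero_or_pos d1 with h0 | hpos
      · rw [h0, Nat.sub_zero, hper, hjm]; exact hchi
      · have h := hQmin (d1 - 1) (by omega)
        rwa [show d1 - 1 + 1 = d1 by omega] at h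
    have hu2M : u2 < M := Nat.mod_lt _ hM0
    have hu12 : u1 ≠ u2 := by
      intro heq
      have hv1 : v (u1 + 1) = v j := by
        rw [hu1_def, hshift _ 1, show j + (M - 1) + 1 = j + M by omega, hper]
      have hv2 : v (u2 + 1) = v (jm + M - d1) := by
        rw [hu2_def, hshift _ 1, show jm + M - (d1 + 1) + 1 = jm + M - d1 by omega]
      have hvv : v j = v (jm + M - d1) := by rw [← hv1, heq, hv2]
      rcases Nat.eq_zero_or_pos d1 with h0 | hpos
      · rw [h0, Nat.sub_zero, hper, hjm] at hvv
        exact hne hvv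
      · have hmodeq := hinj' _ _ hvv
        have hnext : v (j + 1) = v (jm + M - d1 + 1) := by
          rw [← hshift j 1, ← hshift (jm + M - d1) 1, hmodeq]
        rcases eq_or_lt_of_le (show (1 : ℕ) ≤ d1 from hpos) with h1 | h2
        · rw [show jm + M - d1 + 1 = jm + M by omega, hper, hjm] at hnext
          omega
        · have h := hQmin (d1 - 2) (by omega)
          rw [show d1 - 2 + 1 = d1 - 1 by omega] at h
          rw [show jm + M - d1 + 1 = jm + M - (d1 - 1) by omega] at hnext
          omega
    -- second down-crossing
    have hQ'ex : ∃ d, v (jm + d + 1) ≤ c := by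
      refine ⟨jl + M - jm - 1, ?_⟩
      rw [show jm + (jl + M - jm - 1) + 1 = jl + M by omega, hper, hjl]
      exact hclo
    set d2 := Nat.find hQ'ex with hd2
    have hQ'1 : v (jm + d2 + 1) ≤ c := Nat.find_spec hQ'ex
    have hQ'min : ∀ d, d < d2 → c < v (jm + d + 1) := fun d hd => not_le.mp (Nat.find_min hQ'ex hd)
    set w2 := (jm + d2) % M with hw2_def
    have hw2a : v (w2 + 1) ≤ c := by rw [hw2_def, hshift _ 1]; exact hQ'1
    have hw2b : c < v w2 := by
      rw [hw2_def, hmod]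
      rcases Nat.eq_zero_or_pos d2 with h0 | hpos
      · rw [h0, Nat.add_zero, hjm]; exact hchi
      · have h := hQ'min (d2 - 1) (by omega)
        rwa [show jm + (d2 - 1) + 1 = jm + d2 by omega] at h
    have hw2M : w2 < M := Nat.mod_lt _ hM0
    have hjw2 : j ≠ w2 := by
      intro heq
      rcases Nat.eq_zero_or_pos d2 with h0 | hpos
      · have hj_eq : j = jm := by
          rw [heq, hw2_def, h0, Nat.add_zero, Nat.mod_eq_of_lt hjmM]
        exact hne (by rw [hj_eq, hjm])
      · have hmodeq : j % M = (jm + d2) % M := by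
          rw [Nat.mod_eq_of_lt hjM, heq, hw2_def]
        have h3 : v (j + (M - 1)) = v (jm + d2 + (M - 1)) := by
          rw [← hshift j (M - 1), ← hshift (jm + d2) (M - 1), hmodeq]
        rcases eq_or_lt_of_le (show (1 : ℕ) ≤ d2 from hpos) with h1 | h2
        · rw [show jm + d2 + (M - 1) = jm + M by omega, hper, hjm] at h3
          omega
        · rw [show jm + d2 + (M - 1) = jm + (d2 - 1) + M by omega, hper] at h3
          have h4 := hQ'min (d2 - 2) (by omega)
          rw [show jm + (d2 - 2) + 1 = jm + (d2 - 1) by omega] at h4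
          omega
    have hu1j : u1 ≠ j := by
      intro heq; rw [heq] at hu1a; omega
    have hu1w2 : u1 ≠ w2 := by
      intro heq; rw [heq] at hu1a; omega
    have hu2j : u2 ≠ j := by
      intro heq; rw [heq] at hu2a; omega
    have hu2w2 : u2 ≠ w2 := by
      intro heq; rw [heq] at hu2a; omega
    have hsub : ({u1, u2, j, w2} : Finset ℕ) ⊆ (range M).filter
        (fun t => (v t ≤ c ∧ c < v (t + 1)) ∨ (v (t + 1) ≤ c ∧ c < v t)) := by
      intro x hx
      simp only [mem_insert, mem_singleton] at hx
      rcases hx with rfl | rfl | rfl | rfl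
      · exact mem_filter.mpr ⟨mem_range.mpr hu1M, Or.inl ⟨hu1a, hu1b⟩⟩
      · exact mem_filter.mpr ⟨mem_range.mpr hu2M, Or.inl ⟨hu2a, hu2b⟩⟩
      · exact mem_filter.mpr ⟨mem_range.mpr hjM, Or.inr ⟨hc1, hc3⟩⟩
      · exact mem_filter.mpr ⟨mem_range.mpr hw2M, Or.inr ⟨hw2a, hw2b⟩⟩
    have hcard : ({u1, u2, j, w2} : Finset ℕ).card = 4 := by
      rw [Finset.card_insert_of_notMem (by simp [hu12, hu1j, hu1w2]),
        Finset.card_insert_of_notMem (by simp [hu2j, hu2w2]),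
        Finset.card_insert_of_notMem (by simp [hjw2]), Finset.card_singleton]
    calc (4 : ℕ) = ({u1, u2, j, w2} : Finset ℕ).card := hcard.symm
      _ ≤ _ := Finset.card_le_card hsub
  -- assemble
  set LM := (range M).filter (fun j => v (j + 1) < v j ∧ v (j + (M - 1)) < v j) with hLM
  have hjmLM : jm ∈ LM := by
    have hA : v (jm + 1) < v jm := by
      have h1 := hle (jm + 1)
      rcases eq_or_lt_of_le h1 with he | hl
      · exfalso
        have h2 : (jm + 1) % M = jm % M := hinj' (jm + 1) jm (by rw [he, hjm])
        have h3 := hdvd jm 1 h2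
        have := Nat.le_of_dvd one_pos h3
        omega
      · rwa [hjm]
    have hB : v (jm + (M - 1)) < v jm := by
      have h1 := hle (jm + (M - 1))
      rcases eq_or_lt_of_le h1 with he | hl
      · exfalso
        have h2 : (jm + (M - 1)) % M = jm % M := hinj' (jm + (M - 1)) jm (by rw [he, hjm])
        have h3 := hdvd jm (M - 1) h2
        have h4 := Nat.eq_zero_of_dvd_of_lt h3 (by omega)
        omega
      · rwa [hjm]
    exact mem_filter.mpr ⟨mem_range.mpr hjmM, hA, hB⟩
  have hL1 : 1 ≤ LM.card := Finset.card_pos.mpr ⟨jm, hjmLM⟩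
  set Spec := (LM.erase jm).image (fun j => v j - 1) with hSpec
  have hSpecsub : Spec ⊆ Finset.Ico lo hi := by
    intro c hc
    rw [hSpec] at hc
    obtain ⟨j, hjmem, rfl⟩ := Finset.mem_image.mp hc
    have hjLM := Finset.mem_of_mem_erase hjmem
    rw [hLM, mem_filter] at hjLM
    refine Finset.mem_Ico.mpr ⟨?_, ?_⟩
    · have := hge (j + 1)
      have := hjLM.2.1
      omega
    · have := hle j
      omega
  have hSpecCard : Spec.card = LM.card - 1 := by
    rw [hSpec, Finset.card_image_of_injOn, Finset.card_erase_of_mem hjmLM]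
    intro x hx y hy hxy
    have hx' : x ∈ range M := Finset.filter_subset _ _ (Finset.mem_of_mem_erase hx)
    have hy' : y ∈ range M := Finset.filter_subset _ _ (Finset.mem_of_mem_erase hy)
    have hvxy : v x = v y := by
      have : v x - 1 = v y - 1 := hxy
      omega
    exact hinj _ (mem_range.mp hx') _ (mem_range.mp hy') hvxy
  have hmain : ∀ c ∈ Finset.Ico lo hi,
      2 + (if c ∈ Spec then 2 else 0) ≤ ((range M).filter
        (fun j => (v j ≤ c ∧ c < v (j + 1)) ∨ (v (j + 1) ≤ c ∧ c < v j))).card := by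
    intro c hc
    rw [Finset.mem_Ico] at hc
    by_cases hcs : c ∈ Spec
    · rw [if_pos hcs]
      rw [hSpec] at hcs
      obtain ⟨j, hjmem, hjc⟩ := Finset.mem_image.mp hcs
      have hjLM := Finset.mem_of_mem_erase hjmem
      have hjne : j ≠ jm := Finset.ne_of_mem_erase hjmem
      rw [hLM, mem_filter] at hjLM
      have hvne : v j ≠ hi := by
        intro h
        exact hjne (hinj _ (mem_range.mp hjLM.1) _ hjmM (by rw [h, hjm]))
      have hspec := spec_bound j (mem_range.mp hjLM.1) hjLM.2.1 hjLM.2.2 hvne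
      rw [hjc] at hspec
      omega
    · rw [if_neg hcs]
      obtain ⟨ju, hjuM, hjua, hjub⟩ := reach_up c hc.1 hc.2
      obtain ⟨jd, hjdM, hjda, hjdb⟩ := reach_dn c hc.1 hc.2
      have hnejd : ju ≠ jd := by
        intro h; rw [h] at hjua; omega
      have hsub2 : ({ju, jd} : Finset ℕ) ⊆ (range M).filter
          (fun j => (v j ≤ c ∧ c < v (j + 1)) ∨ (v (j + 1) ≤ c ∧ c < v j)) := by
        intro x hx
        simp only [mem_insert, mem_singleton] at hx
        rcases hx with rfl | rfl
        · exact mem_filter.mpr ⟨mem_range.mpr hjuM, Or.inl ⟨hjua, hjub⟩⟩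
        · exact mem_filter.mpr ⟨mem_range.mpr hjdM, Or.inr ⟨hjda, hjdb⟩⟩
      have hcard2 : ({ju, jd} : Finset ℕ).card = 2 := by
        rw [Finset.card_insert_of_notMem (by simp [hnejd]), Finset.card_singleton]
      have := Finset.card_le_card hsub2
      omega
  have hsum_le := Finset.sum_le_sum hmain
  have hsum_eq : ∑ c ∈ Finset.Ico lo hi, (2 + (if c ∈ Spec then 2 else 0))
      = 2 * (Finset.Ico lo hi).card + 2 * Spec.card := by
    rw [Finset.sum_add_distrib, Finset.sum_const, smul_eq_mul]
    congr 1
    · ring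
    · rw [← Finset.sum_filter, Finset.filter_mem_eq_inter,
        Finset.inter_eq_right.mpr hSpecsub, Finset.sum_const, smul_eq_mul, mul_comm]
  have hIcoCard : M - 1 ≤ (Finset.Ico lo hi).card := by
    rw [Int.card_Ico]; omega
  rw [hsum_eq] at hsum_le
  rw [← Tsum] at hsum_le
  exact ⟨hL1, by omega⟩

private lemma mod_add_cancel {n C a b : ℕ} (h : (a + C) % n = (b + C) % n) : a % n = b % n :=
  Nat.ModEq.add_right_cancel' C h

private lemma mod_cancel {m k c a b : ℕ} (hk0 : 0 < k) (ha : a < m) (hb : b < m)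
    (h : (c + a * k) % (m * k) = (c + b * k) % (m * k)) : a = b := by
  have key : ∀ x y : ℕ, x ≤ y → y < m → (c + x * k) % (m * k) = (c + y * k) % (m * k) → x = y := by
    intro x y hxy hym hmod
    have h2 : (c + x * k) ≡ (c + y * k) [MOD m * k] := hmod
    have hle : c + x * k ≤ c + y * k := by
      have := Nat.mul_le_mul_right k hxy
      omega
    have h3 := (Nat.modEq_iff_dvd' hle).mp h2
    rw [Nat.add_sub_add_left] at h3
    rw [← Nat.sub_mul] at h3
    have h6 : (y - x) * k < m * k := mul_lt_mul_of_pos_right (by omega) hk0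
    have h8 := Nat.eq_zero_of_dvd_of_lt h3 h6
    have h9 : y - x = 0 ∨ k = 0 := Nat.mul_eq_zero.mp h8
    omega
  rcases le_total a b with hab | hab
  · exact key a b hab hb h
  · exact (key b a hab ha h.symm).symm

set_option maxHeartbeats 2000000 in
private lemma main_lemma (m k : ℕ) (hm : Odd m) (hk : Odd k) (hk3 : 3 ≤ k) (hmk : 2 * k + 3 ≤ m)
    (π : Equiv.Perm (Fin (m * k))) :
    ∃ i < m * k, k * ((m * k + 1) / 2) + 2 ≤ ksum (m * k) k π i := by
  classical
  by_contra hcon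
  push_neg at hcon
  have hm9 : 9 ≤ m := by omega
  have hk0 : 0 < k := by omega
  have hn0 : 0 < m * k := Nat.mul_pos (by omega) hk0
  have hkn : k < m * k := by
    calc k = 1 * k := (one_mul k).symm
    _ < m * k := mul_lt_mul_of_pos_right (by omega) hk0
  have hnodd : Odd (m * k) := hm.mul hk
  obtain ⟨N2, hN2⟩ : ∃ N2, m * k + 1 = 2 * N2 := by
    obtain ⟨t, ht⟩ := hnodd; exact ⟨t + 1, by omega⟩
  set u : ℕ → ℤ := fun i =>
    if h : i % (m * k) < m * k then ((π ⟨i % (m * k), h⟩ : ℕ) : ℤ) + 1 else 0 with hu_def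
  have hu_per : ∀ i, u (i + m * k) = u i := by
    intro i; simp only [hu_def]; rw [Nat.add_mod_right]
  have hu_val : ∀ i, u i = ((π ⟨i % (m * k), Nat.mod_lt i hn0⟩ : ℕ) : ℤ) + 1 := by
    intro i; simp only [hu_def]; rw [dif_pos (Nat.mod_lt i hn0)]
  have hu_inj : ∀ a b, u a = u b → a % (m * k) = b % (m * k) := by
    intro a b h
    rw [hu_val a, hu_val b] at h
    have h1 : (((π ⟨a % (m * k), Nat.mod_lt a hn0⟩ : Fin (m * k)) : ℕ) : ℤ)
        = (((π ⟨b % (m * k), Nat.mod_lt b hn0⟩ : Fin (m * k)) : ℕ) : ℤ) := by linarith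
    have h2 : (π ⟨a % (m * k), Nat.mod_lt a hn0⟩ : Fin (m * k))
        = π ⟨b % (m * k), Nat.mod_lt b hn0⟩ := by
      apply Fin.ext; exact_mod_cast h1
    have h3 := π.injective h2
    exact congrArg Fin.val h3
  set s : ℕ → ℤ := fun i => ∑ j ∈ range k, u (i + j) with hs_def
  have hs_per : ∀ i, s (i + m * k) = s i := by
    intro i; simp only [hs_def]
    refine Finset.sum_congr rfl fun j _ => ?_
    rw [show i + m * k + j = (i + j) + m * k by omega, hu_per]
  have hstep : ∀ i, s (i + 1) = s i + u (i + k) - u i := by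
    intro i
    simp only [hs_def]
    have A := Finset.sum_range_succ' (fun j => u (i + j)) k
    have B := Finset.sum_range_succ (fun j => u (i + j)) k
    have C : ∑ j ∈ range k, u (i + 1 + j) = ∑ j ∈ range k, u (i + (j + 1)) :=
      Finset.sum_congr rfl fun j _ => by rw [show i + 1 + j = i + (j + 1) by omega]
    rw [C]
    simp only [add_zero] at A
    linarith [A, B]
  set μ : ℤ := (k : ℤ) * (N2 : ℤ) with hμ_def
  set e : ℕ → ℤ := fun i => s i - μ with he_def
  have he_per : ∀ i, e (i + m * k) = e i := by intro i; simp only [he_def, hs_per]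
  have hs_ksum : ∀ i, s i = (ksum (m * k) k π i : ℤ) := by
    intro i
    simp only [hs_def, ksum]
    rw [Nat.cast_sum]
    refine Finset.sum_congr rfl fun j _ => ?_
    rw [dif_pos (Nat.mod_lt (i + j) hn0), hu_val (i + j)]
    push_cast
    ring
  have hsum_u : ∑ x ∈ range (m * k), u x = (m * k : ℤ) * N2 := by
    calc ∑ x ∈ range (m * k), u x
        = ∑ i : Fin (m * k), u i := (Fin.sum_univ_eq_sum_range (fun x => u x) (m * k)).symm
      _ = ∑ i : Fin (m * k), (((π i : ℕ) : ℤ) + 1) := by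
          refine Finset.sum_congr rfl fun i _ => ?_
          rw [hu_val i]
          have h1 : (⟨(i : ℕ) % (m * k), Nat.mod_lt _ hn0⟩ : Fin (m * k)) = i :=
            Fin.ext (Nat.mod_eq_of_lt i.isLt)
          rw [h1]
      _ = ∑ y : Fin (m * k), (((y : ℕ) : ℤ) + 1) := Equiv.sum_comp π (fun y : Fin (m * k) => ((y : ℕ) : ℤ) + 1)
      _ = ∑ x ∈ range (m * k), ((x : ℤ) + 1) := Fin.sum_univ_eq_sum_range (fun x => (x : ℤ) + 1) (m * k)
      _ = (m * k : ℤ) * N2 := by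
          rw [Finset.sum_add_distrib, Finset.sum_const, Finset.card_range, nsmul_eq_mul, mul_one]
          have hg := Finset.sum_range_id_mul_two (m * k)
          have hg3 : (∑ i ∈ range (m * k), i) * 2 + 2 * (m * k) = m * k * (m * k + 1) := by
            obtain ⟨t, ht⟩ : ∃ t, m * k = t + 1 := ⟨m * k - 1, by omega⟩
            rw [ht] at hg ⊢
            simp only [Nat.add_sub_cancel] at hg
            nlinarith [hg]
          have hN2' : (m : ℤ) * k + 1 = 2 * (N2 : ℤ) := by exact_mod_cast hN2
          have hg4 : (∑ x ∈ range (m * k), (x : ℤ)) * 2 + 2 * ((m : ℤ) * k)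
              = ((m : ℤ) * k) * ((m : ℤ) * k + 1) := by
            have hgc := congrArg (fun z : ℕ => (z : ℤ)) hg3
            push_cast at hgc
            linarith [hgc]
          have h5 : ((m : ℤ) * k) * ((m : ℤ) * k + 1) = 2 * (((m : ℤ) * k) * N2) := by
            rw [hN2']; ring
          push_cast
          linarith [hg4, h5]
  have hsum_shift : ∀ i0, ∑ x ∈ range (m * k), u (i0 + x) = (m * k : ℤ) * N2 := by
    intro i0; rw [sum_shift hu_per i0, hsum_u]
  have hchain : ∀ i0, ∑ j ∈ range m, e (i0 + j * k) = 0 := by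
    intro i0
    have h1 : ∑ j ∈ range m, s (i0 + j * k) = ∑ t ∈ range (m * k), u (i0 + t) := by
      rw [sum_blocks (fun t => u (i0 + t)) m k]
      simp only [hs_def]
      refine Finset.sum_congr rfl fun j _ => Finset.sum_congr rfl fun c _ => ?_
      rw [show i0 + (j * k + c) = i0 + j * k + c by omega]
    have h2 : ∑ j ∈ range m, e (i0 + j * k) = (∑ j ∈ range m, s (i0 + j * k)) - m * μ := by
      simp only [he_def]
      rw [Finset.sum_sub_distrib, Finset.sum_const, Finset.card_range, nsmul_eq_mul]
    rw [h2, h1, hsum_shift, hμ_def]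
    push_cast
    ring
  have H : ∀ i, e i ≤ 1 := by
    intro i
    have h1 : i % (m * k) < m * k := Nat.mod_lt i hn0
    have h2 := hcon (i % (m * k)) h1
    have hdiv : (m * k + 1) / 2 = N2 := by omega
    rw [hdiv] at h2
    have h3 : (ksum (m * k) k π (i % (m * k)) : ℤ) < (k : ℤ) * N2 + 2 := by exact_mod_cast h2
    have h4 : s (i % (m * k)) ≤ μ + 1 := by rw [hs_ksum, hμ_def]; omega
    have h5 : s (i % (m * k)) = s i := by
      have := per_mod (f := s) hs_per i 0
      simpa using this
    simp only [he_def]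
    omega
  have hadj : ∀ i, e (i + 1) ≠ e i := by
    intro i heq
    have h2 := hstep i
    simp only [he_def] at heq
    have h1 : u (i + k) = u i := by omega
    have h3 := hu_inj _ _ h1
    have h4 : m * k ∣ k := by
      have h5 : i ≡ i + k [MOD m * k] := h3.symm
      have h6 := (Nat.modEq_iff_dvd' (Nat.le_add_right i k)).mp h5
      simpa using h6
    have := Nat.le_of_dvd hk0 h4
    omega
  have hwalk : ∀ c : ℕ,
      1 ≤ ((range m).filter (fun j => u (c + (j + 1) * k) < u (c + j * k) ∧
            u (c + (j + (m - 1)) * k) < u (c + j * k))).card ∧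
      2 * m + 2 * ((range m).filter (fun j => u (c + (j + 1) * k) < u (c + j * k) ∧
            u (c + (j + (m - 1)) * k) < u (c + j * k))).card ≤
        (∑ j ∈ range m, (u (c + (j + 1) * k) - u (c + j * k)).natAbs) + 4 := by
    intro c
    have hperv : ∀ j, (fun j => u (c + j * k)) (j + m) = (fun j => u (c + j * k)) j := by
      intro j
      simp only
      rw [show c + (j + m) * k = (c + j * k) + m * k by ring, hu_per]
    have hinjv : ∀ j, j < m → ∀ j', j' < m →
        (fun j => u (c + j * k)) j = (fun j => u (c + j * k)) j' → j = j' := by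
      intro a ha b hb hab
      simp only at hab
      exact mod_cancel hk0 ha hb (hu_inj _ _ hab)
    exact walk_lemma m (by omega) (fun j => u (c + j * k)) hperv hinjv
  have hLW : ∀ c : ℕ,
      ((range m).filter (fun j => u (c + (j + 1) * k) < u (c + j * k) ∧
          u (c + (j + (m - 1)) * k) < u (c + j * k))).card ≤ 2 ∧
      ∑ j ∈ range m, (1 - max (e (c + j * k)) (e (c + j * k + 1))) ≤ 1 := by
    intro c
    obtain ⟨h1, h2⟩ := hwalk c
    have hWpos : (0 : ℤ) ≤ ∑ j ∈ range m, (1 - max (e (c + j * k)) (e (c + j * k + 1))) := by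
      refine Finset.sum_nonneg fun j _ => ?_
      have hmx : max (e (c + j * k)) (e (c + j * k + 1)) ≤ 1 :=
        max_le (H (c + j * k)) (H (c + j * k + 1))
      omega
    have hstep_e : ∀ j : ℕ, u (c + (j + 1) * k) - u (c + j * k)
        = e (c + j * k + 1) - e (c + j * k) := by
      intro j
      have h3 := hstep (c + j * k)
      simp only [he_def]
      rw [show c + (j + 1) * k = c + j * k + k by ring]
      omega
    have hTW : ((∑ j ∈ range m, (u (c + (j + 1) * k) - u (c + j * k)).natAbs : ℕ) : ℤ)
        = 2 * m - 2 * ∑ j ∈ range m, (1 - max (e (c + j * k)) (e (c + j * k + 1))) := by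
      have hA : ∑ j ∈ range m, (1 - e (c + j * k)) = (m : ℤ) := by
        rw [Finset.sum_sub_distrib, Finset.sum_const, Finset.card_range, hchain c]
        simp
      have hB : ∑ j ∈ range m, (1 - e (c + j * k + 1)) = (m : ℤ) := by
        have h4 : ∑ j ∈ range m, e (c + j * k + 1) = ∑ j ∈ range m, e ((c + 1) + j * k) :=
          Finset.sum_congr rfl fun j _ => by rw [show c + j * k + 1 = (c + 1) + j * k by ring]
        rw [Finset.sum_sub_distrib, Finset.sum_const, Finset.card_range, h4, hchain (c + 1)]
        simp
      calc ((∑ j ∈ range m, (u (c + (j + 1) * k) - u (c + j * k)).natAbs : ℕ) : ℤ)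
          = ∑ j ∈ range m, |u (c + (j + 1) * k) - u (c + j * k)| := by
            push_cast
            rfl
        _ = ∑ j ∈ range m, |e (c + j * k + 1) - e (c + j * k)| :=
            Finset.sum_congr rfl fun j _ => by rw [hstep_e j]
        _ = ∑ j ∈ range m, ((1 - e (c + j * k)) + (1 - e (c + j * k + 1))
              - 2 * (1 - max (e (c + j * k)) (e (c + j * k + 1)))) := by
            refine Finset.sum_congr rfl fun j _ => ?_
            rcases le_total (e (c + j * k)) (e (c + j * k + 1)) with h | h
            · rw [abs_of_nonneg (by omega), max_eq_right h]; ring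
            · rw [abs_of_nonpos (by omega), max_eq_left h]; ring
        _ = 2 * m - 2 * ∑ j ∈ range m, (1 - max (e (c + j * k)) (e (c + j * k + 1))) := by
            rw [Finset.sum_sub_distrib, Finset.sum_add_distrib, hA, hB, ← Finset.mul_sum]
            ring
    have h2' : (2 * m + 2 * ((range m).filter (fun j => u (c + (j + 1) * k) < u (c + j * k) ∧
          u (c + (j + (m - 1)) * k) < u (c + j * k))).card : ℤ) ≤
        ((∑ j ∈ range m, (u (c + (j + 1) * k) - u (c + j * k)).natAbs : ℕ) : ℤ) + 4 := by
      exact_mod_cast h2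
    rw [hTW] at h2'
    have h1' : (1 : ℤ) ≤ ((range m).filter (fun j => u (c + (j + 1) * k) < u (c + j * k) ∧
          u (c + (j + (m - 1)) * k) < u (c + j * k))).card := by exact_mod_cast h1
    constructor
    · exact_mod_cast (by omega :
        (((range m).filter (fun j => u (c + (j + 1) * k) < u (c + j * k) ∧
          u (c + (j + (m - 1)) * k) < u (c + j * k))).card : ℤ) ≤ 2)
    · omega
  set D := (range (m * k)).filter (fun i => e i ≤ 0 ∧ e (i + 1) ≤ 0) with hD_def
  set G := (range (m * k)).filter (fun i => e (i + 1) = 1 ∧ e (i + k) = 1) with hG_def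
  have hDcard : D.card ≤ k := by
    have hfib : D.card = ∑ c ∈ range k, (D.filter (fun i => i % k = c)).card :=
      Finset.card_eq_sum_card_fiberwise (fun i _ => mem_range.mpr (Nat.mod_lt _ hk0))
    have hper_c : ∀ c ∈ range k, ((D.filter (fun i => i % k = c)).card : ℤ)
        ≤ ∑ j ∈ range m, (1 - max (e (c + j * k)) (e (c + j * k + 1))) := by
      intro c _
      have hinjF : Set.InjOn (fun i => i / k) (D.filter (fun i => i % k = c)) := by
        intro x hx y hy hxy
        simp only [Finset.coe_filter, Set.mem_setOf_eq] at hx hy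
        have h1 := Nat.div_add_mod x k
        have h2 := Nat.div_add_mod y k
        simp only at hxy
        rw [hxy] at h1
        omega
      have himg : (D.filter (fun i => i % k = c)).image (fun i => i / k) ⊆ range m := by
        intro j hj
        obtain ⟨i, hiF, rfl⟩ := Finset.mem_image.mp hj
        have hi1 : i ∈ range (m * k) := Finset.filter_subset _ _ (Finset.filter_subset _ _ hiF)
        exact mem_range.mpr ((Nat.div_lt_iff_lt_mul hk0).mpr (mem_range.mp hi1))
      calc ((D.filter (fun i => i % k = c)).card : ℤ)
          = ∑ j ∈ (D.filter (fun i => i % k = c)).image (fun i => i / k), (1 : ℤ) := by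
            rw [Finset.sum_const, Finset.card_image_of_injOn hinjF, nsmul_eq_mul, mul_one]
        _ ≤ ∑ j ∈ (D.filter (fun i => i % k = c)).image (fun i => i / k),
              (1 - max (e (c + j * k)) (e (c + j * k + 1))) := by
            refine Finset.sum_le_sum fun j hj => ?_
            obtain ⟨i, hiF, rfl⟩ := Finset.mem_image.mp hj
            have hiD : i ∈ D := Finset.filter_subset _ _ hiF
            have hic : i % k = c := (Finset.mem_filter.mp hiF).2
            simp only [hD_def, Finset.mem_filter] at hiD
            have hieq : c + (i / k) * k = i := by
              rw [← hic]; exact Nat.mod_add_div' i k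
            rw [hieq]
            have hmx : max (e i) (e (i + 1)) ≤ 0 := max_le hiD.2.1 hiD.2.2
            omega
        _ ≤ ∑ j ∈ range m, (1 - max (e (c + j * k)) (e (c + j * k + 1))) := by
            refine Finset.sum_le_sum_of_subset_of_nonneg himg fun j _ _ => ?_
            have hmx : max (e (c + j * k)) (e (c + j * k + 1)) ≤ 1 :=
              max_le (H (c + j * k)) (H (c + j * k + 1))
            omega
    have h8 : (D.card : ℤ) ≤ ∑ _c ∈ range k, (1 : ℤ) := by
      rw [hfib]
      push_cast
      exact Finset.sum_le_sum fun c hc => le_trans (hper_c c hc) (hLW c).2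
    rw [Finset.sum_const, Finset.card_range, nsmul_eq_mul, mul_one] at h8
    exact_mod_cast h8
  have hGcard : G.card ≤ 2 * k := by
    have hfib : G.card = ∑ c ∈ range k, (G.filter (fun i => i % k = c)).card :=
      Finset.card_eq_sum_card_fiberwise (fun i _ => mem_range.mpr (Nat.mod_lt _ hk0))
    have hper_c : ∀ c ∈ range k, (G.filter (fun i => i % k = c)).card ≤ 2 := by
      intro c _
      have hmap : ∀ i ∈ G.filter (fun i => i % k = c), ((i + k) % (m * k)) / k ∈
          (range m).filter (fun j => u (c + (j + 1) * k) < u (c + j * k) ∧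
            u (c + (j + (m - 1)) * k) < u (c + j * k)) := by
        intro i hiF
        have hiG : i ∈ G := Finset.filter_subset _ _ hiF
        have hic : i % k = c := (Finset.mem_filter.mp hiF).2
        simp only [hG_def, Finset.mem_filter, Finset.mem_range] at hiG
        obtain ⟨hin, he1, hek⟩ := hiG
        have hqn : (i + k) % (m * k) < m * k := Nat.mod_lt _ hn0
        have hqk : ((i + k) % (m * k)) % k = c := by
          rw [Nat.mod_mod_of_dvd _ ⟨m, by ring⟩, Nat.add_mod_right]
          exact hic
        have hjm : ((i + k) % (m * k)) / k < m := (Nat.div_lt_iff_lt_mul hk0).mpr hqn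
        have hcjk : c + (((i + k) % (m * k)) / k) * k = (i + k) % (m * k) := by
          rw [← hqk]; exact Nat.mod_add_div' _ k
        have hu_q : u (c + (((i + k) % (m * k)) / k) * k) = u (i + k) := by
          rw [hcjk]
          have := per_mod (f := u) hu_per (i + k) 0
          simpa using this
        have hu_q1 : u (c + ((((i + k) % (m * k)) / k) + 1) * k) = u (i + k + k) := by
          rw [show c + ((((i + k) % (m * k)) / k) + 1) * k
              = (c + (((i + k) % (m * k)) / k) * k) + k by ring, hcjk]
          exact per_mod (f := u) hu_per (i + k) k
        have hu_qm : u (c + ((((i + k) % (m * k)) / k) + (m - 1)) * k) = u i := by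
          rw [show c + ((((i + k) % (m * k)) / k) + (m - 1)) * k
              = (c + (((i + k) % (m * k)) / k) * k) + (m - 1) * k by ring, hcjk]
          rw [per_mod (f := u) hu_per (i + k) ((m - 1) * k)]
          have h9 : (m - 1) + 1 = m := by omega
          have hmm : i + k + (m - 1) * k = i + m * k := by
            calc i + k + (m - 1) * k = i + ((m - 1) + 1) * k := by ring
              _ = i + m * k := by rw [h9]
          rw [hmm, hu_per]
        have hstep1 := hstep (i + k)
        have hstep0 := hstep i
        have he_k1 : e (i + k + 1) ≤ 0 := by
          have h1 := hadj (i + k)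
          have h2 := H (i + k + 1)
          rw [hek] at h1
          omega
        have he_0 : e i ≤ 0 := by
          have h1 := hadj i
          have h2 := H i
          rw [he1] at h1
          omega
        refine Finset.mem_filter.mpr ⟨Finset.mem_range.mpr hjm, ?_, ?_⟩
        · rw [hu_q1, hu_q]
          simp only [he_def] at he_k1 hek
          omega
        · rw [hu_qm, hu_q]
          simp only [he_def] at he1 he_0
          omega
      have hinjF : Set.InjOn (fun i => ((i + k) % (m * k)) / k)
          (G.filter (fun i => i % k = c)) := by
        intro x hx y hy hxy
        simp only [Finset.coe_filter, Set.mem_setOf_eq] at hx hy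
        have hxr : x < m * k := by
          have := hx.1; simp only [hG_def, Finset.mem_filter, Finset.mem_range] at this
          exact this.1
        have hyr : y < m * k := by
          have := hy.1; simp only [hG_def, Finset.mem_filter, Finset.mem_range] at this
          exact this.1
        have hq1 : ((x + k) % (m * k)) % k = c := by
          rw [Nat.mod_mod_of_dvd _ ⟨m, by ring⟩, Nat.add_mod_right]; exact hx.2
        have hq2 : ((y + k) % (m * k)) % k = c := by
          rw [Nat.mod_mod_of_dvd _ ⟨m, by ring⟩, Nat.add_mod_right]; exact hy.2
        simp only at hxy
        have h1 := Nat.div_add_mod ((x + k) % (m * k)) k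
        have h2 := Nat.div_add_mod ((y + k) % (m * k)) k
        rw [hxy] at h1
        have hqeq : (x + k) % (m * k) = (y + k) % (m * k) := by omega
        have hmodeq : x % (m * k) = y % (m * k) := mod_add_cancel hqeq
        rw [Nat.mod_eq_of_lt hxr, Nat.mod_eq_of_lt hyr] at hmodeq
        exact hmodeq
      calc (G.filter (fun i => i % k = c)).card
          ≤ _ := Finset.card_le_card_of_injOn _ hmap hinjF
        _ ≤ 2 := (hLW c).1
    rw [hfib]
    calc ∑ c ∈ range k, (G.filter (fun i => i % k = c)).card
        ≤ ∑ _c ∈ range k, 2 := Finset.sum_le_sum hper_c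
      _ = 2 * k := by rw [Finset.sum_const, Finset.card_range, smul_eq_mul, mul_comm]
  set φ : ℕ → ℤ := fun i => if e (i + 1) = 1 then 1 else 0 with hφ_def
  have hφ_per : ∀ i, φ (i + m * k) = φ i := by
    intro i; simp only [hφ_def]
    rw [show i + m * k + 1 = (i + 1) + m * k by omega, he_per]
  set dI : ℕ → ℤ := fun i => if e (i + 1) ≤ 0 ∧ e (i + 2) ≤ 0 then 1 else 0 with hdI_def
  have hpoint : ∀ i, φ i + φ (i + 1) + dI i = 1 := by
    intro i
    simp only [hφ_def, hdI_def]
    have hidx : i + 1 + 1 = i + 2 := by omega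
    by_cases h1 : e (i + 1) = 1
    · have h2 := hadj (i + 1)
      rw [h1, hidx] at h2
      rw [if_pos h1, if_neg (by rw [hidx]; exact h2), if_neg (by rw [h1]; intro hcon; omega)]
      norm_num
    · have h1' : e (i + 1) ≤ 0 := by have := H (i + 1); omega
      rw [if_neg h1]
      by_cases h2 : e (i + 1 + 1) = 1
      · rw [if_pos h2, if_neg (by rw [← hidx]; intro hcon; omega)]
        norm_num
      · have h2' : e (i + 2) ≤ 0 := by have := H (i + 2); rw [hidx] at h2; omega
        rw [if_neg h2, if_pos ⟨h1', h2'⟩]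
        norm_num
  have hsum_point : ∑ i ∈ range (m * k), (φ i + φ (i + 1) + dI i) = (m * k : ℤ) := by
    calc ∑ i ∈ range (m * k), (φ i + φ (i + 1) + dI i)
        = ∑ _i ∈ range (m * k), (1 : ℤ) := Finset.sum_congr rfl fun i _ => hpoint i
      _ = (m * k : ℤ) := by
          rw [Finset.sum_const, Finset.card_range, nsmul_eq_mul, mul_one]
          push_cast
          ring
  have hφshift : ∑ i ∈ range (m * k), φ (i + 1) = ∑ i ∈ range (m * k), φ i := by
    have h1 := sum_shift hφ_per 1
    rw [← h1]
    exact Finset.sum_congr rfl fun i _ => by rw [add_comm]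
  have hdIsum : ∑ i ∈ range (m * k), dI i = (D.card : ℤ) := by
    set dD : ℕ → ℤ := fun i => if e i ≤ 0 ∧ e (i + 1) ≤ 0 then 1 else 0 with hdD_def
    have hdD_per : ∀ i, dD (i + m * k) = dD i := by
      intro i; simp only [hdD_def]
      rw [he_per, show i + m * k + 1 = (i + 1) + m * k by omega, he_per]
    have h1 : ∀ i, dI i = dD (i + 1) := by
      intro i; simp only [hdI_def, hdD_def]
    have h2 := sum_shift hdD_per 1
    have h3 : ∑ i ∈ range (m * k), dI i = ∑ i ∈ range (m * k), dD i := by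
      rw [← h2]
      exact Finset.sum_congr rfl fun i _ => by rw [h1 i, add_comm]
    rw [h3, hD_def]
    rw [Finset.sum_boole]
  have hAφ : ((((range (m * k)).filter (fun i => e (i + 1) = 1)).card : ℕ) : ℤ)
      = ∑ i ∈ range (m * k), φ i := by
    simp only [hφ_def]
    rw [Finset.sum_boole]
  have hacount : 2 * ((((range (m * k)).filter (fun i => e (i + 1) = 1)).card : ℕ) : ℤ)
      + (D.card : ℤ) = ((m : ℤ) * k) := by
    have h1 : ∑ i ∈ range (m * k), (φ i + φ (i + 1) + dI i)
        = ∑ i ∈ range (m * k), φ i + ∑ i ∈ range (m * k), φ (i + 1)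
          + ∑ i ∈ range (m * k), dI i := by
      rw [Finset.sum_add_distrib, Finset.sum_add_distrib]
    rw [h1, hφshift, hdIsum] at hsum_point
    rw [hAφ]
    push_cast at hsum_point ⊢
    linarith [hsum_point]
  obtain ⟨K2, hK2⟩ : ∃ K2, k = 2 * K2 + 1 := by
    obtain ⟨t, ht⟩ := hk; exact ⟨t, by omega⟩
  have hprop : ∀ i ∈ (range (m * k)).filter (fun i => e (i + 1) = 1),
      (∀ t, t < K2 → ((i + 2 * t + 2) % (m * k)) ∉ D) → i ∈ G := by
    intro i hiA hnb
    simp only [Finset.mem_filter] at hiA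
    have hstepP : ∀ t, t ≤ K2 → e (i + 2 * t + 1) = 1 := by
      intro t
      induction t with
      | zero =>
        intro _
        rw [show i + 2 * 0 + 1 = i + 1 by omega]
        exact hiA.2
      | succ t ih =>
        intro ht
        have hPt := ih (by omega)
        have hle0 : e (i + 2 * t + 2) ≤ 0 := by
          have h1 := hadj (i + 2 * t + 1)
          have h2 := H (i + 2 * t + 2)
          rw [hPt, show i + 2 * t + 1 + 1 = i + 2 * t + 2 by omega] at h1
          omega
        have hnbt := hnb t (by omega)
        have hex : e ((i + 2 * t + 2) % (m * k)) = e (i + 2 * t + 2) := by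
          have := per_mod (f := e) he_per (i + 2 * t + 2) 0
          simpa using this
        have hex1 : e ((i + 2 * t + 2) % (m * k) + 1) = e (i + 2 * t + 3) := by
          have h5 := per_mod (f := e) he_per (i + 2 * t + 2) 1
          rw [show i + 2 * t + 2 + 1 = i + 2 * t + 3 by omega] at h5
          exact h5
        have h6 : e (i + 2 * t + 3) = 1 := by
          by_contra h7
          refine hnbt ?_
          simp only [hD_def, Finset.mem_filter]
          refine ⟨mem_range.mpr (Nat.mod_lt _ hn0), by rw [hex]; exact hle0, ?_⟩
          rw [hex1]
          have := H (i + 2 * t + 3)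
          omega
        rw [show i + 2 * (t + 1) + 1 = i + 2 * t + 3 by omega]
        exact h6
    have hik : e (i + k) = 1 := by
      have h8 := hstepP K2 (le_refl K2)
      rw [show i + 2 * K2 + 1 = i + k by omega] at h8
      exact h8
    simp only [hG_def, Finset.mem_filter]
    exact ⟨hiA.1, hiA.2, hik⟩
  have hAGB : ((range (m * k)).filter (fun i => e (i + 1) = 1)).card
      ≤ G.card + (((range (m * k)).filter (fun i => e (i + 1) = 1)).filter
          (fun i => ∃ t, t < K2 ∧ ((i + 2 * t + 2) % (m * k)) ∈ D)).card := by
    have hsub : (range (m * k)).filter (fun i => e (i + 1) = 1) ⊆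
        G ∪ ((range (m * k)).filter (fun i => e (i + 1) = 1)).filter
          (fun i => ∃ t, t < K2 ∧ ((i + 2 * t + 2) % (m * k)) ∈ D) := by
      intro i hiA
      by_cases hb : ∃ t, t < K2 ∧ ((i + 2 * t + 2) % (m * k)) ∈ D
      · exact Finset.mem_union_right _ (Finset.mem_filter.mpr ⟨hiA, hb⟩)
      · push_neg at hb
        exact Finset.mem_union_left _ (hprop i hiA fun t ht => hb t ht)
    calc ((range (m * k)).filter (fun i => e (i + 1) = 1)).card
        ≤ _ := Finset.card_le_card hsub
      _ ≤ _ := Finset.card_union_le _ _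
  have hBadcard : (((range (m * k)).filter (fun i => e (i + 1) = 1)).filter
      (fun i => ∃ t, t < K2 ∧ ((i + 2 * t + 2) % (m * k)) ∈ D)).card ≤ K2 * D.card := by
    have hsub : ((range (m * k)).filter (fun i => e (i + 1) = 1)).filter
        (fun i => ∃ t, t < K2 ∧ ((i + 2 * t + 2) % (m * k)) ∈ D) ⊆
        (range K2).biUnion (fun t => (range (m * k)).filter
          (fun i => ((i + 2 * t + 2) % (m * k)) ∈ D)) := by
      intro i hiB
      simp only [Finset.mem_filter] at hiB
      obtain ⟨⟨hir, _⟩, t, ht, htD⟩ := hiB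
      exact Finset.mem_biUnion.mpr ⟨t, mem_range.mpr ht, Finset.mem_filter.mpr ⟨hir, htD⟩⟩
    calc (((range (m * k)).filter (fun i => e (i + 1) = 1)).filter
        (fun i => ∃ t, t < K2 ∧ ((i + 2 * t + 2) % (m * k)) ∈ D)).card
        ≤ _ := Finset.card_le_card hsub
      _ ≤ ∑ t ∈ range K2, ((range (m * k)).filter
            (fun i => ((i + 2 * t + 2) % (m * k)) ∈ D)).card := Finset.card_biUnion_le
      _ ≤ ∑ _t ∈ range K2, D.card := by
          refine Finset.sum_le_sum fun t _ => ?_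
          refine Finset.card_le_card_of_injOn (fun i => (i + 2 * t + 2) % (m * k))
            (fun i hi => (Finset.mem_filter.mp hi).2) ?_
          intro x hx y hy hxy
          simp only [Finset.coe_filter, Set.mem_setOf_eq, Finset.mem_range] at hx hy
          simp only at hxy
          rw [show x + 2 * t + 2 = x + (2 * t + 2) by omega,
            show y + 2 * t + 2 = y + (2 * t + 2) by omega] at hxy
          have h1 : x % (m * k) = y % (m * k) := mod_add_cancel hxy
          rw [Nat.mod_eq_of_lt hx.1, Nat.mod_eq_of_lt hy.1] at h1
          exact h1
      _ = K2 * D.card := by rw [Finset.sum_const, Finset.card_range, smul_eq_mul]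
  have hfin1 : ((m : ℤ) * k) ≤ 2 * (G.card : ℤ) + (k : ℤ) * (D.card : ℤ) := by
    have h1 : ((((range (m * k)).filter (fun i => e (i + 1) = 1)).card : ℕ) : ℤ)
        ≤ (G.card : ℤ) + ((((range (m * k)).filter (fun i => e (i + 1) = 1)).filter
          (fun i => ∃ t, t < K2 ∧ ((i + 2 * t + 2) % (m * k)) ∈ D)).card : ℤ) := by
      exact_mod_cast hAGB
    have h2 : ((((range (m * k)).filter (fun i => e (i + 1) = 1)).filter
          (fun i => ∃ t, t < K2 ∧ ((i + 2 * t + 2) % (m * k)) ∈ D)).card : ℤ)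
        ≤ (K2 : ℤ) * (D.card : ℤ) := by exact_mod_cast hBadcard
    have h3 : (k : ℤ) = 2 * K2 + 1 := by exact_mod_cast hK2
    have h4 : (k : ℤ) * (D.card : ℤ) = 2 * ((K2 : ℤ) * (D.card : ℤ)) + (D.card : ℤ) := by
      rw [h3]; ring
    linarith [hacount, h1, h2, h4]
  have hG2 : ((G.card : ℕ) : ℤ) ≤ 2 * k := by exact_mod_cast hGcard
  have hD2 : ((D.card : ℕ) : ℤ) ≤ k := by exact_mod_cast hDcard
  have hk3' : (3 : ℤ) ≤ k := by exact_mod_cast hk3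
  have hbig : ((2 * k + 3 : ℕ) : ℤ) * k ≤ (m : ℤ) * k := by
    have h5 : (2 * k + 3) * k ≤ m * k := Nat.mul_le_mul_right k hmk
    exact_mod_cast h5
  have hkD : (k : ℤ) * (D.card : ℤ) ≤ (k : ℤ) * k :=
    mul_le_mul_of_nonneg_left hD2 (by positivity)
  push_cast at hbig
  nlinarith [hfin1, hG2, hkD, hbig, hk3']




theorem stmt9 (m k : ℕ) (hm : Odd m) (hk : Odd k) (hk3 : 3 ≤ k) (hmk : 2 * k + 3 ≤ m) :
    (2 : ℚ) ≤ msum (m * k) k ∧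
    ∀ π : Equiv.Perm (Fin (m * k)), ∃ i < m * k,
      (k : ℚ) * ((m : ℚ) * k + 1) / 2 + 2 ≤ (ksum (m * k) k π i : ℚ) := by
  have hmk1 : Odd (m * k) := hm.mul hk
  obtain ⟨N2, hN2⟩ : ∃ N2, m * k + 1 = 2 * N2 := by
    obtain ⟨t, ht⟩ := hmk1; exact ⟨t + 1, by omega⟩
  have hdiv : (m * k + 1) / 2 = N2 := by omega
  have hcast : ((k * ((m * k + 1) / 2) : ℕ) : ℚ) = (k : ℚ) * ((m : ℚ) * k + 1) / 2 := by
    rw [hdiv]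
    have h3 : ((m * k + 1 : ℕ) : ℚ) = 2 * N2 := by exact_mod_cast hN2
    push_cast at h3
    push_cast
    rw [h3]
    ring
  constructor
  · apply Finset.le_inf'
    intro π _
    obtain ⟨i, hi, hbound⟩ := main_lemma m k hm hk hk3 hmk π
    have h1 : k * ((m * k + 1) / 2) + 2 ≤ maxksum (m * k) k π :=
      le_trans hbound (Finset.le_sup (Finset.mem_range.mpr hi))
    have h1q : ((k * ((m * k + 1) / 2) : ℕ) : ℚ) + 2 ≤ (maxksum (m * k) k π : ℚ) := by
      exact_mod_cast h1
    rw [hcast] at h1q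
    have h5 : ((m * k : ℕ) : ℚ) = (m : ℚ) * k := by push_cast; ring
    rw [h5]
    linarith [h1q]
  · intro π
    obtain ⟨i, hi, hbound⟩ := main_lemma m k hm hk hk3 hmk π
    refine ⟨i, hi, ?_⟩
    have h1q : ((k * ((m * k + 1) / 2) : ℕ) : ℚ) + 2 ≤ (ksum (m * k) k π i : ℚ) := by
      exact_mod_cast hbound
    rw [hcast] at h1q
    exact h1q
end

section
/- Let k be odd and let A_1,...,A_k each be a cyclic sequence of length m over two symbols, and let P be the length-mk interleaved sequence (a_{1,1}, a_{2,1},…, a_{k,1}, a_{1,2},…, a_{k,2},…, a_{1,m},…, a_{k,m}). For a cyclic sequence X = (x_1,...,x_M) of two symbols, let f(X) = |{i : x_i ≠ x_{i+1}}| (with x_{M+1} = x_1) count the number of runs. Then f(P) ≤ (k−1)m + min{f(A_1),...,f(A_k)}. -/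
/-- Number of runs of a cyclic two-symbol sequence of length `M`
(given as the restriction of `x : ℕ → Bool` to `{0,…,M-1}`, read cyclically). -/
def runs (M : ℕ) (x : ℕ → Bool) : ℕ :=
  ((Finset.range M).filter (fun i => x i ≠ x ((i + 1) % M))).card



-- helper: ((a + i) % n + (n - i % n)) % n = a % n
lemma mod_cancel_s10 (n i a : ℕ) (hn : 0 < n) :
    ((a + i) % n + (n - i % n)) % n = a % n := by
  have h1 : i % n < n := Nat.mod_lt _ hn
  have h2 := Nat.mod_add_div i n
  set c := n * (i / n) with hc
  have key : a + i + (n - i % n) = a + c + n := by omega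
  rw [Nat.mod_add_mod, key, Nat.add_mod_right, hc, Nat.add_mul_mod_self_left]

lemma mod_cancel' (n i a : ℕ) (hn : 0 < n) :
    ((a + (n - i % n)) % n + i) % n = a % n := by
  have h1 : i % n < n := Nat.mod_lt _ hn
  have h2 := Nat.mod_add_div i n
  set c := n * (i / n) with hc
  have key : a + (n - i % n) + i = a + c + n := by omega
  rw [Nat.mod_add_mod, key, Nat.add_mod_right, hc, Nat.add_mul_mod_self_left]

-- chain lemma
lemma chain (k : ℕ) (hk : Odd k) (v : ℕ → Bool) (hv : v 0 = v k) :
    (∑ j ∈ Finset.range k, if v j ≠ v (j + 1) then 1 else 0) ≤ k - 1 := by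
  by_contra hcon
  push_neg at hcon
  have hsum : (∑ j ∈ Finset.range k, if v j ≠ v (j + 1) then 1 else 0) ≤ k := by
    calc _ ≤ ∑ j ∈ Finset.range k, 1 := Finset.sum_le_sum (by intro j _; split <;> omega)
    _ = k := by simp
  have hall : ∀ j < k, v j ≠ v (j + 1) := by
    by_contra hx
    push_neg at hx
    obtain ⟨j0, hj0, hj0e⟩ := hx
    have : (∑ j ∈ Finset.range k, if v j ≠ v (j + 1) then 1 else 0)
        = (∑ j ∈ (Finset.range k).erase j0, if v j ≠ v (j + 1) then 1 else 0)
          + (if v j0 ≠ v (j0 + 1) then 1 else 0) := by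
      rw [Finset.sum_erase_add _ _ (Finset.mem_range.mpr hj0)]
    have h2 : (∑ j ∈ (Finset.range k).erase j0, if v j ≠ v (j + 1) then 1 else 0)
        ≤ ((Finset.range k).erase j0).card := by
      calc _ ≤ ∑ _j ∈ (Finset.range k).erase j0, 1 :=
            Finset.sum_le_sum (by intro j _; split <;> omega)
      _ = _ := by simp
    have h3 : ((Finset.range k).erase j0).card = k - 1 := by
      rw [Finset.card_erase_of_mem (Finset.mem_range.mpr hj0), Finset.card_range]
    rw [if_neg (by simp [hj0e])] at this
    omega
  -- alternation
  have halt : ∀ j ≤ k, v j = if j % 2 = 0 then v 0 else !(v 0) := by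
    intro j
    induction j with
    | zero => simp
    | succ j ih =>
      intro hj
      have hvj := ih (by omega)
      have hne := hall j (by omega)
      rcases Nat.even_or_odd j with he | ho
      · have : j % 2 = 0 := Nat.even_iff.mp he
        have h4 : (j + 1) % 2 = 1 := by omega
        simp [this] at hvj
        simp [h4, ← hvj]
        revert hne; cases v j <;> cases v (j+1) <;> simp
      · have h5 : j % 2 = 1 := Nat.odd_iff.mp ho
        have h4 : (j + 1) % 2 = 0 := by omega
        simp [h5] at hvj
        simp [h4]
        rw [hvj] at hne
        revert hne; cases v 0 <;> cases v (j+1) <;> simp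
  have := halt k le_rfl
  rw [Nat.odd_iff.mp hk] at this
  simp at this
  rw [← hv] at this
  revert this; cases v 0 <;> simp

theorem stmt10 (m k : ℕ) (hm : 0 < m) (hk : Odd k) (A : ℕ → ℕ → Bool) :
    runs (m * k) (fun t => A (t % k) (t / k)) ≤
      (k - 1) * m +
        (Finset.range k).inf' (Finset.nonempty_range_iff.mpr hk.pos.ne')
          (fun i => runs m (A i)) := by
  obtain ⟨i, hi_mem, hinf⟩ := Finset.exists_mem_eq_inf'
    (Finset.nonempty_range_iff.mpr hk.pos.ne') (fun i => runs m (A i))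
  rw [hinf]
  have hi : i < k := Finset.mem_range.mp hi_mem
  have hk0 : 0 < k := hk.pos
  set n := m * k with hn
  have hn0 : 0 < n := Nat.mul_pos hm hk0
  set G : ℕ → ℕ := fun t =>
    if A (t % k) (t / k) ≠ A (((t + 1) % n) % k) (((t + 1) % n) / k) then 1 else 0 with hG
  have hruns : runs n (fun t => A (t % k) (t / k)) = ∑ t ∈ Finset.range n, G t := by
    rw [runs, Finset.card_filter]
  rw [hruns]
  -- facts for small values
  have hlt : ∀ q j : ℕ, q < m → j < k → q * k + j < n := by
    intro q j hq hj
    calc q * k + j < q * k + k := by omega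
    _ = (q + 1) * k := by ring
    _ ≤ m * k := Nat.mul_le_mul_right k (by omega)
  have hdm : ∀ q j : ℕ, j < k → (q * k + j) / k = q := by
    intro q j hj
    rw [mul_comm, Nat.mul_add_div hk0, Nat.div_eq_of_lt hj, add_zero]
  have hmm : ∀ q j : ℕ, j < k → (q * k + j) % k = j := by
    intro q j hj
    rw [mul_comm, Nat.mul_add_mod, Nat.mod_eq_of_lt hj]
  -- reindexing
  have hre : (∑ t ∈ Finset.range n, G t)
      = ∑ p ∈ Finset.range m ×ˢ Finset.range k, G ((p.1 * k + i + p.2) % n) := by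
    refine (Finset.sum_nbij' (i := fun p : ℕ × ℕ => (p.1 * k + i + p.2) % n)
      (j := fun t => ((t + (n - i % n)) % n / k, (t + (n - i % n)) % n % k))
      ?_ ?_ ?_ ?_ ?_).symm
    · intro p _
      exact Finset.mem_range.mpr (Nat.mod_lt _ hn0)
    · intro t _
      have hs : (t + (n - i % n)) % n < n := Nat.mod_lt _ hn0
      refine Finset.mem_product.mpr ⟨Finset.mem_range.mpr ?_, Finset.mem_range.mpr ?_⟩
      · exact Nat.div_lt_of_lt_mul (by rw [mul_comm]; exact hs)
      · exact Nat.mod_lt _ hk0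
    · intro p hp
      obtain ⟨h1, h2⟩ := Finset.mem_product.mp hp
      have hq := Finset.mem_range.mp h1
      have hj := Finset.mem_range.mp h2
      have e1 : p.1 * k + i + p.2 = (p.1 * k + p.2) + i := by omega
      have e2 : ((p.1 * k + p.2 + i) % n + (n - i % n)) % n = (p.1 * k + p.2) % n :=
        mod_cancel_s10 n i _ hn0
      have e3 : (p.1 * k + p.2) % n = p.1 * k + p.2 := Nat.mod_eq_of_lt (hlt _ _ hq hj)
      rw [e1, e2, e3, hdm _ _ hj, hmm _ _ hj]
    · intro t ht
      have htn := Finset.mem_range.mp ht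
      dsimp only
      set s := (t + (n - i % n)) % n with hs
      have e1 : s / k * k + i + s % k = s + i := by
        have := Nat.div_add_mod s k
        have h2 : s / k * k = k * (s / k) := Nat.mul_comm _ _
        omega
      rw [e1, hs, mod_cancel' n i t hn0, Nat.mod_eq_of_lt htn]
    · intro p _
      rfl
  rw [hre, Finset.sum_product]
  have hbound : ∀ q < m, (∑ j ∈ Finset.range k, G ((q * k + i + j) % n))
      ≤ (k - 1) + (if A i q ≠ A i ((q + 1) % m) then 1 else 0) := by
    intro q hq
    set v : ℕ → Bool := fun j => A (((q * k + i + j) % n) % k) (((q * k + i + j) % n) / k)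
      with hv
    have hGv : ∀ j, G ((q * k + i + j) % n) = if v j ≠ v (j + 1) then 1 else 0 := by
      intro j
      have : ((q * k + i + j) % n + 1) % n = (q * k + i + (j + 1)) % n := by
        rw [Nat.mod_add_mod]; ring_nf
      simp only [hG, hv, this]
    have hv0 : v 0 = A i q := by
      have e : (q * k + i + 0) % n = q * k + i := by
        rw [add_zero]; exact Nat.mod_eq_of_lt (hlt _ _ hq hi)
      simp only [hv, e, hdm _ _ hi, hmm _ _ hi]
    have hvk : v k = A i ((q + 1) % m) := by
      have e0 : q * k + i + k = (q + 1) * k + i := by ring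
      rcases Nat.lt_or_ge (q + 1) m with hq1 | hq1
      · have e : (q * k + i + k) % n = (q + 1) * k + i := by
          rw [e0]; exact Nat.mod_eq_of_lt (hlt _ _ hq1 hi)
        have e2 : (q + 1) % m = q + 1 := Nat.mod_eq_of_lt hq1
        simp only [hv, e, hdm _ _ hi, hmm _ _ hi, e2]
      · have hq1' : q + 1 = m := by omega
        have e : (q * k + i + k) % n = i := by
          rw [e0, hq1', hn, Nat.add_mod_left]
          exact Nat.mod_eq_of_lt (lt_of_lt_of_le hi (Nat.le_mul_of_pos_left k hm))
        have e2 : (q + 1) % m = 0 := by rw [hq1', Nat.mod_self]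
        simp only [hv, e, e2, Nat.mod_eq_of_lt hi, Nat.div_eq_of_lt hi]
    rw [Finset.sum_congr rfl (fun j _ => hGv j)]
    by_cases hcase : A i q = A i ((q + 1) % m)
    · have hch : v 0 = v k := by rw [hv0, hvk, hcase]
      have := chain k hk v hch
      have he : (if A i q ≠ A i ((q + 1) % m) then 1 else 0) = 0 := if_neg (by simp [hcase])
      omega
    · have : (∑ j ∈ Finset.range k, if v j ≠ v (j + 1) then 1 else 0) ≤ k := by
        calc _ ≤ ∑ _j ∈ Finset.range k, 1 :=
              Finset.sum_le_sum (by intro j _; split <;> omega)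
        _ = k := by simp
      have he : (if A i q ≠ A i ((q + 1) % m) then 1 else 0) = 1 := if_pos hcase
      omega
  calc (∑ q ∈ Finset.range m, ∑ j ∈ Finset.range k, G ((q * k + i + j) % n))
      ≤ ∑ q ∈ Finset.range m,
          ((k - 1) + (if A i q ≠ A i ((q + 1) % m) then 1 else 0)) :=
        Finset.sum_le_sum (fun q hq => hbound q (Finset.mem_range.mp hq))
    _ = (k - 1) * m + runs m (A i) := by
        rw [Finset.sum_add_distrib, Finset.sum_const, Finset.card_range, smul_eq_mul,
          runs, Finset.card_filter, mul_comm]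
end

section
/- Let a ≥ 2 and m ≥ 1 be integers and set k = 2a+1 and n = (2a+1)m + a + 1 (so k is odd, k ≥ 5, and n ≡ (k+1)/2 mod k). Then msum(n, k) > 1; i.e., for every permutation π of {1,...,n} some cyclic k-consecutive sum exceeds k(n+1)/2 + 1. -/
open Fin.NatCast Fin.CommRing in
theorem stmt12_aux (a m : ℕ) (ha : 2 ≤ a) (hm : 1 ≤ m)
    (n k : ℕ) (hn : n = (2 * a + 1) * m + a + 1) (hk : k = 2 * a + 1) :
    ∀ π : Equiv.Perm (Fin n),
      ∃ i < n, (k : ℚ) * ((n : ℚ) + 1) / 2 + 1 < (ksum n k π i : ℚ) := by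
  have hn0 : 0 < n := by omega
  haveI : NeZero n := ⟨by omega⟩
  set S : ℚ := (k:ℚ) * ((n:ℚ) + 1) / 2 with hS
  intro π
  by_contra hcon
  push_neg at hcon
  set F : Fin n → ℚ := fun x => ((π x : ℕ) : ℚ) + 1 with hF
  set W : ℕ → Fin n → ℚ := fun l i => ∑ j ∈ Finset.range l, F (i + (j : Fin n)) with hWdef
  have hksN : ∀ i : Fin n, ksum n k π (i:ℕ) = ∑ j ∈ Finset.range k, ((π (i + (j : Fin n)) : ℕ) + 1) := by
    intro i
    unfold ksum
    refine Finset.sum_congr rfl fun j _ => ?_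
    rw [dif_pos (Nat.mod_lt _ hn0)]
    have he : (⟨((i:ℕ) + j) % n, Nat.mod_lt _ hn0⟩ : Fin n) = i + (j : Fin n) := by
      ext
      simp only [Fin.add_def, Fin.val_natCast]
      rw [Nat.add_mod_mod]
    rw [he]
  have hks : ∀ i : Fin n, (ksum n k π (i : ℕ) : ℚ) = W k i := by
    intro i
    rw [hksN i]
    push_cast
    rfl
  have hWadd : ∀ (s t : ℕ) (i : Fin n), W (s + t) i = W s i + W t (i + (s : Fin n)) := by
    intro s t i
    simp only [hWdef]
    rw [Finset.sum_range_add]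
    congr 1
    refine Finset.sum_congr rfl fun j _ => ?_
    congr 1
    push_cast
    ring
  set T : ℚ := ∑ x : Fin n, (((x : ℕ) : ℚ) + 1) with hT
  have hWn : ∀ i : Fin n, W n i = T := by
    intro i
    have h1 : W n i = ∑ x : Fin n, F (i + x) := by
      simp only [hWdef]
      rw [← Fin.sum_univ_eq_sum_range (fun j => F (i + (j : Fin n))) n]
      exact Finset.sum_congr rfl fun x _ => by rw [Fin.cast_val_eq_self]
    have h2 : ∑ x : Fin n, F (i + x) = ∑ x : Fin n, F x := by
      simpa using Equiv.sum_comp (Equiv.addLeft i) F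
    have h3 : ∑ x : Fin n, F x = T := by
      simp only [hF, hT]
      exact Equiv.sum_comp π (fun x => ((x : ℕ) : ℚ) + 1)
    rw [h1, h2, h3]
  have hT2 : T = (n : ℚ) * ((n : ℚ) + 1) / 2 := by
    have h0 : T = ∑ j ∈ Finset.range n, ((j : ℚ) + 1) :=
      Fin.sum_univ_eq_sum_range (fun j => ((j : ℚ) + 1)) n
    have h1 : (∑ j ∈ Finset.range (n + 1), (j : ℚ)) * 2 = ((n : ℚ) + 1) * (n : ℚ) := by
      have h2 : (∑ i ∈ Finset.range (n + 1), i) * 2 = (n + 1) * n := by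
        simpa using Finset.sum_range_id_mul_two (n + 1)
      have h4 := congrArg (fun x : ℕ => (x : ℚ)) h2
      push_cast at h4
      linarith
    have h3 : ∑ j ∈ Finset.range (n + 1), (j : ℚ) = ∑ j ∈ Finset.range n, ((j : ℚ) + 1) := by
      rw [Finset.sum_range_succ' (fun j => (j : ℚ)) n]
      push_cast
      ring
    rw [h0, ← h3]
    linarith
  have hWub : ∀ i : Fin n, W k i ≤ S + 1 := by
    intro i
    rw [← hks]
    exact hcon (i : ℕ) i.isLt
  have hWm : ∀ (r : ℕ) (i : Fin n), W (r * k) i ≤ (r : ℚ) * (S + 1) := by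
    intro r
    induction r with
    | zero => intro i; simp [hWdef]
    | succ r ih =>
      intro i
      have he : (r + 1) * k = r * k + k := by ring
      rw [he, hWadd]
      have h1 := hWub (i + ((r * k : ℕ) : Fin n))
      have h2 := ih i
      have h5 : ((r + 1 : ℕ) : ℚ) = (r : ℚ) + 1 := by push_cast; ring
      rw [h5]
      linarith
  have hlow : ∀ p : Fin n, T - (m : ℚ) * (S + 1) ≤ W (a + 1) p := by
    intro p
    have hmk : m * k + (a + 1) = n := by rw [hk, hn]; ring
    have hsplit := hWadd (m * k) (a + 1) (p - ((m * k : ℕ) : Fin n))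
    rw [hmk, hWn] at hsplit
    have hpp : p - ((m * k : ℕ) : Fin n) + ((m * k : ℕ) : Fin n) = p := by ring
    rw [hpp] at hsplit
    have := hWm m (p - ((m * k : ℕ) : Fin n))
    linarith
  have hup : ∀ p : Fin n, W a p ≤ ((m : ℚ) + 1) * (S + 1) - T := by
    intro p
    have h1 : (m + 1) * k = n + a := by rw [hk, hn]; ring
    have h2 := hWadd n a p
    rw [Fin.natCast_self, add_zero, hWn] at h2
    have h4 := hWm (m + 1) p
    rw [h1, h2] at h4
    push_cast at h4
    linarith
  have hEl : ∀ p : Fin n, 2 * T - (2 * (m : ℚ) + 1) * (S + 1) ≤ F p := by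
    intro p
    have h1 := hWadd 1 a p
    have hW1 : W 1 p = F p := by
      simp [hWdef]
    rw [hW1, Nat.cast_one] at h1
    rw [show 1 + a = a + 1 by ring] at h1
    have h3 := hlow p
    have h4 := hup (p + 1)
    rw [h1] at h3
    linarith
  have hp1 : F (π.symm ⟨0, hn0⟩) = 1 := by
    simp [hF]
  have hfin := hEl (π.symm ⟨0, hn0⟩)
  rw [hp1] at hfin
  have hnq : (n : ℚ) = (2 * (a : ℚ) + 1) * (m : ℚ) + (a : ℚ) + 1 := by
    rw [hn]; push_cast; ring
  have hkq : (k : ℚ) = 2 * (a : ℚ) + 1 := by rw [hk]; push_cast; ring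
  have haq : (2 : ℚ) ≤ (a : ℚ) := by exact_mod_cast ha
  have hmq : (1 : ℚ) ≤ (m : ℚ) := by exact_mod_cast hm
  rw [hT2, hS, hnq, hkq] at hfin
  nlinarith [hfin, haq, hmq,
    mul_nonneg (by linarith : (0:ℚ) ≤ (a:ℚ) - 2) (by linarith : (0:ℚ) ≤ (m:ℚ) - 1)]


theorem stmt12 (a m : ℕ) (ha : 2 ≤ a) (hm : 1 ≤ m) :
    1 < msum ((2 * a + 1) * m + a + 1) (2 * a + 1) ∧
    ∀ π : Equiv.Perm (Fin ((2 * a + 1) * m + a + 1)),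
      ∃ i < (2 * a + 1) * m + a + 1,
        ((2 * a + 1 : ℕ) : ℚ) * ((((2 * a + 1) * m + a + 1 : ℕ) : ℚ) + 1) / 2 + 1 <
          (ksum ((2 * a + 1) * m + a + 1) (2 * a + 1) π i : ℚ) := by
  have key := stmt12_aux a m ha hm ((2 * a + 1) * m + a + 1) (2 * a + 1) rfl rfl
  constructor
  · rw [msum]; refine (Finset.lt_inf'_iff _).2 ?_
    intro π _
    obtain ⟨i, hi, hlt⟩ := key π
    have h1 : ksum ((2 * a + 1) * m + a + 1) (2 * a + 1) π i ≤
        maxksum ((2 * a + 1) * m + a + 1) (2 * a + 1) π :=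
      Finset.le_sup (Finset.mem_range.2 hi)
    have h2 : (ksum ((2 * a + 1) * m + a + 1) (2 * a + 1) π i : ℚ) ≤
        (maxksum ((2 * a + 1) * m + a + 1) (2 * a + 1) π : ℚ) := by exact_mod_cast h1
    linarith
  · exact key
end

section
/- For every positive integer m, msum(10m+2, 5) ≥ 3/2; i.e., for every permutation π of {1,...,10m+2}, there is an index i with cyclic 5-consecutive sum s_i ≥ 5(10m+3)/2 + 3/2 = 25m + 9. -/
open Fin.NatCast Fin.CommRing in
lemma key (n m : ℕ) (hm : 1 ≤ m) (hnm : n = 10 * m + 2) (π : Equiv.Perm (Fin n)) :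
    ∃ i < n, 25 * m + 9 ≤ ksum n 5 π i := by
  have hn0 : 0 < n := by omega
  haveI : NeZero n := ⟨by omega⟩
  set F : Fin n → ℕ := fun x => (π x : ℕ) + 1 with hF
  set S : ℕ → ℕ := fun i => ∑ j ∈ Finset.range 5, F (((i + j : ℕ) : Fin n)) with hSdef
  have hmod : ∀ i j : ℕ, (i + j) % n = (i % n + j) % n :=
    fun i j => ((Nat.mod_modEq i n).add_right j).symm
  -- ksum = S
  have hks : ∀ i, ksum n 5 π i = S i := by
    intro i
    unfold ksum
    apply Finset.sum_congr rfl
    intro j _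
    rw [dif_pos (Nat.mod_lt _ hn0)]
    have e : ((i + j : ℕ) : Fin n) = ⟨(i + j) % n, Nat.mod_lt _ hn0⟩ := by
      apply Fin.ext; simp only [Fin.val_natCast]
    simp only [hF, e]
  -- injectivity of F composed with cast
  have hFinj : ∀ a b : Fin n, F a = F b → a = b := by
    intro a b hab
    have : π a = π b := by
      apply Fin.ext
      simpa [hF] using hab
    exact π.injective this
  have hcast : ∀ a b : ℕ, ((a : Fin n) = (b : Fin n)) ↔ a % n = b % n := by
    intro a b
    constructor
    · intro h
      have := congrArg Fin.val h
      simpa [Fin.val_natCast] using this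
    · intro h
      apply Fin.ext
      simpa [Fin.val_natCast] using h
  -- total sum of F
  have hT : ∑ x : Fin n, F x = (5 * m + 1) * (10 * m + 3) := by
    have h1 : ∑ x : Fin n, F x = ∑ x : Fin n, ((x : ℕ) + 1) := by
      rw [hF]
      exact Equiv.sum_comp π (fun x => (x : ℕ) + 1)
    have h2 : ∑ x : Fin n, ((x : ℕ) + 1) = ∑ i ∈ Finset.range n, (i + 1) :=
      Fin.sum_univ_eq_sum_range (fun i => i + 1) n
    have h3 : ∑ i ∈ Finset.range (n + 1), i = ∑ i ∈ Finset.range n, (i + 1) + 0 :=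
      Finset.sum_range_succ' id n
    have h4 : (∑ i ∈ Finset.range (n + 1), i) * 2 = (n + 1) * n :=
      Finset.sum_range_id_mul_two (n + 1)
    have h5 : (n + 1) * n = ((5 * m + 1) * (10 * m + 3)) * 2 := by rw [hnm]; ring
    omega
  -- shift invariance
  have hshift : ∀ j : ℕ, ∑ i ∈ Finset.range n, F (((i + j : ℕ) : Fin n)) = ∑ x : Fin n, F x := by
    intro j
    have h1 : ∀ i : ℕ, ((i + j : ℕ) : Fin n) = (i : Fin n) + (j : Fin n) := by
      intro i; push_cast; ring
    calc ∑ i ∈ Finset.range n, F (((i + j : ℕ) : Fin n))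
        = ∑ i ∈ Finset.range n, F ((i : Fin n) + (j : Fin n)) :=
          Finset.sum_congr rfl (fun i _ => by rw [h1])
      _ = ∑ x : Fin n, F (((x : ℕ) : Fin n) + (j : Fin n)) :=
          (Fin.sum_univ_eq_sum_range (fun i => F ((i : Fin n) + (j : Fin n))) n).symm
      _ = ∑ x : Fin n, F (x + (j : Fin n)) :=
          Finset.sum_congr rfl (fun x _ => by rw [Fin.cast_val_eq_self])
      _ = ∑ x : Fin n, F x := Equiv.sum_comp (Equiv.addRight ((j : Fin n))) F
  -- total sum of S
  have hSsum : ∑ i ∈ Finset.range n, S i = 5 * ((5 * m + 1) * (10 * m + 3)) := by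
    rw [hSdef]
    rw [Finset.sum_comm]
    have : ∀ j ∈ Finset.range 5, ∑ i ∈ Finset.range n, F (((i + j : ℕ) : Fin n))
        = (5 * m + 1) * (10 * m + 3) := fun j _ => (hshift j).trans hT
    rw [Finset.sum_congr rfl this, Finset.sum_const, Finset.card_range, smul_eq_mul]
  -- periodicity of S
  have hSper : ∀ i, S i = S (i % n) := by
    intro i
    apply Finset.sum_congr rfl
    intro j _
    congr 1
    rw [hcast]
    exact hmod i j
  -- swap identity
  have hswap : ∀ i, S i + F (((i + 5 : ℕ) : Fin n)) = S (i + 1) + F ((i : ℕ) : Fin n) := by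
    intro i
    simp only [hSdef]
    simp only [Finset.sum_range_succ, Finset.sum_range_zero]
    simp only [show i + 0 = i from rfl, show i + 1 + 0 = i + 1 from rfl,
      show i + 1 + 1 = i + 2 from rfl, show i + 1 + 2 = i + 3 from rfl,
      show i + 1 + 3 = i + 4 from rfl, show i + 1 + 4 = i + 5 from rfl]
    ring
  -- S i ≠ S (i+1)
  have hne : ∀ i, S i ≠ S (i + 1) := by
    intro i h
    have h2 : F (((i + 5 : ℕ) : Fin n)) = F ((i : ℕ) : Fin n) := by
      have := hswap i
      omega
    have h3 := hFinj _ _ h2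
    rw [hcast] at h3
    have h4 : n ∣ 5 := by
      have := (Nat.modEq_iff_dvd' (Nat.le_add_right i 5)).mp h3.symm
      simpa using this
    have := Nat.le_of_dvd (by norm_num) h4
    omega
  by_contra hcon
  push_neg at hcon
  have hSle : ∀ i, S i ≤ 25 * m + 8 := by
    intro i
    rw [hSper i, ← hks]
    have := hcon (i % n) (Nat.mod_lt _ hn0)
    omega
  set M : ℕ := 25 * m + 8 with hM
  set d : ℕ → ℕ := fun i => M - S i with hd
  have hdsum : ∑ i ∈ Finset.range n, d i = 5 * m + 1 := by
    have h1 : ∑ i ∈ Finset.range n, (d i + S i) = n * M := by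
      have : ∀ i ∈ Finset.range n, d i + S i = M := by
        intro i _
        have := hSle i
        simp only [hd]
        omega
      rw [Finset.sum_congr rfl this, Finset.sum_const, Finset.card_range, smul_eq_mul]
    rw [Finset.sum_add_distrib, hSsum] at h1
    have h2 : n * M = 5 * ((5 * m + 1) * (10 * m + 3)) + (5 * m + 1) := by
      rw [hnm, hM]; ring
    omega
  have hdper : ∀ i, d i = d (i % n) := by
    intro i; simp only [hd]; rw [hSper i]
  have hd1 : ∀ i, 1 ≤ d i + d (i + 1) := by
    intro i
    by_contra h
    have h0 : d i = 0 ∧ d (i + 1) = 0 := by omega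
    have := hSle i
    have := hSle (i + 1)
    have := hne i
    simp only [hd] at h0
    omega
  have hshiftd : ∑ i ∈ Finset.range n, d (i + 1) = ∑ i ∈ Finset.range n, d i := by
    have h1 := Finset.sum_range_succ d n
    have h2 := Finset.sum_range_succ' d n
    have h3 : d n = d 0 := by rw [hdper n, Nat.mod_self]
    omega
  have hpair : ∀ i < n, d i + d (i + 1) = 1 := by
    intro i hi
    by_contra h
    have h2 : 2 ≤ d i + d (i + 1) := by have := hd1 i; omega
    have hlt : ∑ x ∈ Finset.range n, (1 : ℕ) < ∑ x ∈ Finset.range n, (d x + d (x + 1)) := by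
      apply Finset.sum_lt_sum (fun x _ => hd1 x)
      exact ⟨i, Finset.mem_range.mpr hi, by omega⟩
    rw [Finset.sum_const, Finset.card_range, smul_eq_mul, mul_one] at hlt
    rw [Finset.sum_add_distrib, hshiftd, hdsum] at hlt
    omega
  have hpair' : ∀ i, d i + d (i + 1) = 1 := by
    intro i
    have h1 : d i = d (i % n) := hdper i
    have h2 : d (i + 1) = d (i % n + 1) := by
      rw [hdper (i + 1), hdper (i % n + 1), hmod i 1]
    rw [h1, h2]
    exact hpair (i % n) (Nat.mod_lt _ hn0)
  -- difference formula
  have hdiff : ∀ i, (F (((i + 5 : ℕ) : Fin n)) : ℤ) - (F ((i : ℕ) : Fin n) : ℤ)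
      = 2 * (d i : ℤ) - 1 := by
    intro i
    have h1 := hswap i
    have h2 : d i = M - S i := rfl
    have h3 : d (i + 1) = M - S (i + 1) := rfl
    have h4 := hSle i
    have h5 := hSle (i + 1)
    have h6 := hpair' i
    omega
  have hper2 : ∀ i, d (i + 2) = d i := by
    intro i
    have a := hpair' i
    have b := hpair' (i + 1)
    rw [show i + 1 + 1 = i + 2 from rfl] at b
    omega
  have hd5 : ∀ i, d i + d (i + 5) = 1 := by
    intro i
    have a := hper2 (i + 1)
    have b := hper2 (i + 3)
    rw [show i + 1 + 2 = i + 3 from rfl] at a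
    rw [show i + 3 + 2 = i + 5 from rfl] at b
    have c := hpair' i
    omega
  have hten : F (((10 : ℕ) : Fin n)) = F ((0 : ℕ) : Fin n) := by
    have h1 := hdiff 0
    have h2 := hdiff 5
    have h3 := hd5 0
    rw [show (0 : ℕ) + 5 = 5 from rfl] at h1 h3
    rw [show (5 : ℕ) + 5 = 10 from rfl] at h2
    have : (F (((10 : ℕ) : Fin n)) : ℤ) = (F ((0 : ℕ) : Fin n) : ℤ) := by omega
    exact_mod_cast this
  have h3 := hFinj _ _ hten
  rw [hcast] at h3
  have h10 : 10 % n = 0 := by simpa using h3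
  have hdvd : n ∣ 10 := Nat.dvd_of_mod_eq_zero h10
  have := Nat.le_of_dvd (by norm_num) hdvd
  omega

theorem stmt13 (m : ℕ) (hm : 1 ≤ m) :
    (3 : ℚ) / 2 ≤ msum (10 * m + 2) 5 ∧
    ∀ π : Equiv.Perm (Fin (10 * m + 2)), ∃ i < 10 * m + 2,
      25 * m + 9 ≤ ksum (10 * m + 2) 5 π i := by
  have hmain : ∀ π : Equiv.Perm (Fin (10 * m + 2)), ∃ i < 10 * m + 2,
      25 * m + 9 ≤ ksum (10 * m + 2) 5 π i := fun π => key _ m hm rfl π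
  refine ⟨?_, hmain⟩
  apply Finset.le_inf'
  intro π _
  obtain ⟨i, hi, hk⟩ := hmain π
  have h1 : (25 * m + 9 : ℕ) ≤ maxksum (10 * m + 2) 5 π :=
    le_trans hk (Finset.le_sup (Finset.mem_range.mpr hi))
  have h2 : ((25 * m + 9 : ℕ) : ℚ) ≤ (maxksum (10 * m + 2) 5 π : ℚ) := by exact_mod_cast h1
  push_cast at h2 ⊢
  linarith
end

section
/- For every positive integer m, msum(10m+7, 5) ≥ 2; i.e., for every permutation π of {1,...,10m+7}, there is an index i with cyclic 5-consecutive sum s_i ≥ 5(5m+4) + 2. -/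
namespace Stmt14Aux

variable {n : ℕ} (hn : 0 < n) (π : Equiv.Perm (Fin n))

/-- cyclic value function -/
def cyc (hn : 0 < n) (π : Equiv.Perm (Fin n)) (t : ℕ) : ℕ :=
  (π ⟨t % n, Nat.mod_lt _ hn⟩ : ℕ) + 1

lemma cyc_add_n (t : ℕ) : cyc hn π (t + n) = cyc hn π t := by
  simp [cyc, Nat.add_mod_right]

lemma ksum_eq (i : ℕ) : ksum n 5 π i = ∑ j ∈ Finset.range 5, cyc hn π (i + j) := by
  unfold ksum cyc
  refine Finset.sum_congr rfl fun j _ => ?_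
  rw [dif_pos (Nat.mod_lt _ hn)]

lemma ksum_mod (i : ℕ) : ksum n 5 π (i % n) = ksum n 5 π i := by
  unfold ksum
  refine Finset.sum_congr rfl fun j _ => ?_
  congr 1 <;> rw [Nat.mod_add_mod]

lemma block_sum (i K : ℕ) :
    ∑ j ∈ Finset.range K, ksum n 5 π (i + 5 * j)
      = ∑ t ∈ Finset.range (5 * K), cyc hn π (i + t) := by
  induction K with
  | zero => simp
  | succ K ih =>
    rw [Finset.sum_range_succ, ih]
    have h5 : 5 * (K + 1) = 5 * K + 5 := by ring
    rw [h5, Finset.sum_range_add, ksum_eq hn π]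
    simp only [Nat.add_assoc]

lemma period_sum (i : ℕ) :
    ∑ t ∈ Finset.range n, cyc hn π (i + t) = ∑ t ∈ Finset.range n, cyc hn π t := by
  induction i with
  | zero => simp
  | succ i ih =>
    have key : ∑ t ∈ Finset.range n, cyc hn π (i + 1 + t) + cyc hn π i
        = ∑ t ∈ Finset.range n, cyc hn π (i + t) + cyc hn π (i + n) := by
      have h1 := Finset.sum_range_succ (fun t => cyc hn π (i + t)) n
      have h2 := Finset.sum_range_succ' (fun t => cyc hn π (i + t)) n
      have h3 : ∀ t, cyc hn π (i + (t + 1)) = cyc hn π (i + 1 + t) := by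
        intro t; congr 1; ring
      simp only [h3] at h2
      have hz : cyc hn π (i + 0) = cyc hn π i := by rw [Nat.add_zero]
      omega
    rw [cyc_add_n] at key
    have hz : cyc hn π (i + 0) = cyc hn π i := by rw [Nat.add_zero]
    omega

lemma total_sum :
    ∑ t ∈ Finset.range n, cyc hn π t = ∑ t ∈ Finset.range n, (t + 1) := by
  have h1 : ∑ x : Fin n, cyc hn π (x : ℕ) = ∑ t ∈ Finset.range n, cyc hn π t :=
    Fin.sum_univ_eq_sum_range _ _
  have h2 : ∀ x : Fin n, cyc hn π (x : ℕ) = (π x : ℕ) + 1 := by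
    intro x
    unfold cyc
    rw [show (⟨(x : ℕ) % n, Nat.mod_lt _ hn⟩ : Fin n) = x from
      Fin.ext (Nat.mod_eq_of_lt x.isLt)]
  have h3 : ∑ x : Fin n, ((π x : ℕ) + 1) = ∑ x : Fin n, ((x : ℕ) + 1) :=
    Equiv.sum_comp π (fun x => (x : ℕ) + 1)
  have h4 : ∑ x : Fin n, ((x : ℕ) + 1) = ∑ t ∈ Finset.range n, (t + 1) :=
    Fin.sum_univ_eq_sum_range _ _
  rw [← h1]; simp_rw [h2]; rw [h3, h4]

lemma two_total : 2 * ∑ t ∈ Finset.range n, (t + 1) = n * (n + 1) := by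
  have h1 : ∑ t ∈ Finset.range (n + 1), t = ∑ t ∈ Finset.range n, (t + 1) := by
    rw [Finset.sum_range_succ' (fun t => t) n]; simp
  have h2 := Finset.sum_range_id_mul_two (n + 1)
  calc 2 * ∑ t ∈ Finset.range n, (t + 1)
      = (∑ i ∈ Finset.range (n + 1), i) * 2 := by rw [h1]; ring
    _ = (n + 1) * n := h2
    _ = n * (n + 1) := Nat.mul_comm _ _

lemma double_wrap (i : ℕ) :
    ∑ t ∈ Finset.range (2 * n + 1), cyc hn π (i + t)
      = n * (n + 1) + cyc hn π i := by
  have h : 2 * n + 1 = n + (n + 1) := by ring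
  rw [h, Finset.sum_range_add]
  rw [Finset.sum_range_succ]
  have e1 : ∀ t, cyc hn π (i + (n + t)) = cyc hn π (i + t + n) := by
    intro t; congr 1; ring
  simp only [e1]
  simp only [cyc_add_n hn π]
  rw [period_sum hn π, total_sum hn π]
  have h2 := two_total (n := n)
  omega

end Stmt14Aux

open Stmt14Aux in
theorem stmt14 (m : ℕ) (hm : 1 ≤ m) :
    (2 : ℚ) ≤ msum (10 * m + 7) 5 ∧
    ∀ π : Equiv.Perm (Fin (10 * m + 7)), ∃ i < 10 * m + 7,
      5 * (5 * m + 4) + 2 ≤ ksum (10 * m + 7) 5 π i := by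
  have hn : 0 < 10 * m + 7 := by omega
  set n := 10 * m + 7 with hndef
  have main : ∀ π : Equiv.Perm (Fin n), ∃ i < n, 5 * (5 * m + 4) + 2 ≤ ksum n 5 π i := by
    intro π
    by_contra hc
    push_neg at hc
    -- position of the value n
    set x0 : Fin n := π.symm ⟨n - 1, by omega⟩ with hx0
    have hcyc : cyc hn π (x0 : ℕ) = n := by
      unfold cyc
      have : (⟨(x0 : ℕ) % n, Nat.mod_lt _ hn⟩ : Fin n) = x0 :=
        Fin.ext (Nat.mod_eq_of_lt x0.isLt)
      rw [this, hx0, Equiv.apply_symm_apply]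
      show n - 1 + 1 = n
      omega
    have hsum : ∑ j ∈ Finset.range (4 * m + 3), ksum n 5 π ((x0 : ℕ) + 5 * j)
        = n * (n + 1) + n := by
      rw [block_sum hn π]
      have h5 : 5 * (4 * m + 3) = 2 * n + 1 := by omega
      rw [h5, double_wrap hn π, hcyc]
    have hub : ∑ j ∈ Finset.range (4 * m + 3), ksum n 5 π ((x0 : ℕ) + 5 * j)
        ≤ (4 * m + 3) * (25 * m + 21) := by
      have : ∀ j ∈ Finset.range (4 * m + 3),
          ksum n 5 π ((x0 : ℕ) + 5 * j) ≤ 25 * m + 21 := by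
        intro j _
        have h1 := hc (((x0 : ℕ) + 5 * j) % n) (Nat.mod_lt _ hn)
        rw [ksum_mod π] at h1
        omega
      calc ∑ j ∈ Finset.range (4 * m + 3), ksum n 5 π ((x0 : ℕ) + 5 * j)
          ≤ ∑ _j ∈ Finset.range (4 * m + 3), (25 * m + 21) := Finset.sum_le_sum this
        _ = (4 * m + 3) * (25 * m + 21) := by
            rw [Finset.sum_const, Finset.card_range]; ring
    have e1 : n * (n + 1) + n = 100 * m ^ 2 + 160 * m + 63 := by
      rw [hndef]; ring
    have e2 : (4 * m + 3) * (25 * m + 21) = 100 * m ^ 2 + 159 * m + 63 := by ring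
    omega
  refine ⟨?_, main⟩
  apply Finset.le_inf'
  intro π _
  obtain ⟨i, hi, hk⟩ := main π
  have hmax : 25 * m + 22 ≤ maxksum n 5 π := by
    unfold maxksum
    have h := Finset.le_sup (f := ksum n 5 π) (Finset.mem_range.mpr hi)
    omega
  have hq : (25 * m + 22 : ℚ) ≤ (maxksum n 5 π : ℚ) := by
    exact_mod_cast Nat.cast_le.mpr hmax
  have hnq : (n : ℚ) = 10 * m + 7 := by rw [hndef]; push_cast; ring
  rw [hnq]
  push_cast at hq ⊢
  linarith
end

section
/- Let k be even and suppose n ≡ ±1 (mod k) with n > k. Then msum(n,k) = k/2. -/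
namespace Stmt16Aux

/-- reduction mod `n` as an element of `Fin n` -/
def c (n : ℕ) (hn : 0 < n) (x : ℕ) : Fin n := ⟨x % n, Nat.mod_lt x hn⟩

lemma c_add {n : ℕ} (hn : 0 < n) (a b : ℕ) : c n hn (a + b) = c n hn a + c n hn b := by
  haveI : NeZero n := ⟨hn.ne'⟩
  simp [c, Fin.add_def, Nat.add_mod]

lemma c_coe {n : ℕ} (hn : 0 < n) (j : Fin n) : c n hn j.val = j := by
  simp [c, Fin.ext_iff, Nat.mod_eq_of_lt j.isLt]

lemma ksum_eq {n : ℕ} (hn : 0 < n) (k : ℕ) (π : Equiv.Perm (Fin n)) (i : ℕ) :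
    ksum n k π i = ∑ j ∈ Finset.range k, ((π (c n hn (i + j)) : ℕ) + 1) := by
  unfold ksum
  refine Finset.sum_congr rfl fun j _ => ?_
  rw [dif_pos (Nat.mod_lt _ hn)]
  rfl

lemma ksum_mod {n : ℕ} (hn : 0 < n) (k : ℕ) (π : Equiv.Perm (Fin n)) (i : ℕ) :
    ksum n k π i = ksum n k π (i % n) := by
  rw [ksum_eq hn, ksum_eq hn]
  refine Finset.sum_congr rfl fun j _ => ?_
  congr 2
  simp [c, Fin.ext_iff, Nat.mod_add_mod]

lemma ksum_le_maxksum {n : ℕ} (hn : 0 < n) (k : ℕ) (π : Equiv.Perm (Fin n)) (i : ℕ) :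
    ksum n k π i ≤ maxksum n k π := by
  rw [ksum_mod hn]
  exact Finset.le_sup (Finset.mem_range.2 (Nat.mod_lt _ hn))

lemma sum_window {n : ℕ} (hn : 0 < n) (F : Fin n → ℕ) (i : ℕ) :
    ∑ j ∈ Finset.range n, F (c n hn (i + j)) = ∑ x : Fin n, F x := by
  haveI : NeZero n := ⟨hn.ne'⟩
  rw [← Fin.sum_univ_eq_sum_range (fun j => F (c n hn (i + j))) n]
  have h : ∀ j : Fin n, c n hn (i + j.val) = c n hn i + j := fun j => by
    rw [c_add hn, c_coe hn]
  simp only [h]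
  exact Fintype.sum_equiv (Equiv.addLeft (c n hn i)) _ _ (fun j => rfl)

lemma sum_window' {n : ℕ} (hn : 0 < n) (π : Equiv.Perm (Fin n)) (i : ℕ) :
    ∑ j ∈ Finset.range n, ((π (c n hn (i + j)) : ℕ) + 1) = ∑ x : Fin n, ((π x : ℕ) + 1) :=
  sum_window hn (fun x => ((π x : ℕ) + 1)) i

lemma gauss : ∀ n : ℕ, ∑ j ∈ Finset.range n, (j + 1) * 2 = n * (n + 1) := by
  intro n
  induction n with
  | zero => simp
  | succ m ih => rw [Finset.sum_range_succ, ih]; ring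

lemma sum_F {n : ℕ} (π : Equiv.Perm (Fin n)) :
    (∑ x : Fin n, ((π x : ℕ) + 1)) * 2 = n * (n + 1) := by
  rw [Finset.sum_mul]
  rw [Equiv.sum_comp π (fun x : Fin n => ((x : ℕ) + 1) * 2)]
  rw [Fin.sum_univ_eq_sum_range (fun x => (x + 1) * 2) n]
  exact gauss n

lemma sum_blocks {n : ℕ} (hn : 0 < n) (k : ℕ) (π : Equiv.Perm (Fin n)) (i : ℕ) :
    ∀ m : ℕ, ∑ t ∈ Finset.range m, ksum n k π (i + t * k)
      = ∑ j ∈ Finset.range (m * k), ((π (c n hn (i + j)) : ℕ) + 1) := by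
  intro m
  induction m with
  | zero => simp
  | succ m ih =>
    rw [Finset.sum_range_succ, ih, Nat.succ_mul, Finset.sum_range_add, ksum_eq hn]
    congr 1
    refine Finset.sum_congr rfl fun j _ => ?_
    rw [add_assoc]

/-! ### The construction: 1, n, 2, n-1, … -/

def sig (n : ℕ) (a : ℕ) : ℕ := if a % 2 = 0 then a / 2 else n - 1 - a / 2

def tau (n : ℕ) (v : ℕ) : ℕ := if 2 * v + 1 ≤ n then 2 * v else 2 * (n - 1 - v) + 1

lemma sig_lt {n : ℕ} (hn : 0 < n) {a : ℕ} (ha : a < n) : sig n a < n := by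
  unfold sig; split_ifs <;> omega

lemma tau_lt {n : ℕ} (hn : 0 < n) {v : ℕ} (hv : v < n) : tau n v < n := by
  unfold tau; split_ifs <;> omega

def perm (n : ℕ) (hn : 0 < n) (hodd : n % 2 = 1) : Equiv.Perm (Fin n) where
  toFun x := ⟨sig n x.val, sig_lt hn x.isLt⟩
  invFun v := ⟨tau n v.val, tau_lt hn v.isLt⟩
  left_inv x := by
    have hx := x.isLt
    apply Fin.ext
    simp only [sig, tau]
    split_ifs <;> omega
  right_inv v := by
    have hv := v.isLt
    apply Fin.ext
    simp only [sig, tau]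
    split_ifs <;> omega

lemma pair_bound {n : ℕ} (hn : 0 < n) (hodd : n % 2 = 1) (a : ℕ) :
    (sig n (a % n) + 1) + (sig n ((a + 1) % n) + 1) ≤ n + 2 := by
  have hb : a % n < n := Nat.mod_lt _ hn
  have h1 : (a + 1) % n = (a % n + 1) % n := (Nat.mod_add_mod a n 1).symm
  have h2 : (a + 1) % n = if a % n + 1 = n then 0 else a % n + 1 := by
    rw [h1]
    split_ifs with h
    · rw [h, Nat.mod_self]
    · exact Nat.mod_eq_of_lt (by omega)
  rw [h2]
  simp only [sig]
  split_ifs <;> omega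

lemma sum_pairs (r : ℕ) (g : ℕ → ℕ) :
    ∑ j ∈ Finset.range (2 * r), g j = ∑ t ∈ Finset.range r, (g (2 * t) + g (2 * t + 1)) := by
  induction r with
  | zero => simp
  | succ m ih =>
    have h : 2 * (m + 1) = 2 * m + 1 + 1 := by ring
    rw [h, Finset.sum_range_succ, Finset.sum_range_succ, ih, Finset.sum_range_succ]
    ring

lemma maxksum_perm_le {n k r : ℕ} (hn : 0 < n) (hodd : n % 2 = 1) (hkr : k = 2 * r) :
    maxksum n k (perm n hn hodd) ≤ r * (n + 2) := by
  apply Finset.sup_le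
  intro i _
  rw [ksum_eq hn, hkr]
  have hval : ∀ x : ℕ, ((perm n hn hodd (c n hn x) : ℕ) + 1) = sig n (x % n) + 1 := by
    intro x; rfl
  calc ∑ j ∈ Finset.range (2 * r), ((perm n hn hodd (c n hn (i + j)) : ℕ) + 1)
      = ∑ t ∈ Finset.range r, (((perm n hn hodd (c n hn (i + 2 * t)) : ℕ) + 1)
          + ((perm n hn hodd (c n hn (i + (2 * t + 1))) : ℕ) + 1)) := by
        exact sum_pairs r _
    _ ≤ ∑ t ∈ Finset.range r, (n + 2) := by
        refine Finset.sum_le_sum fun t _ => ?_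
        rw [hval, hval]
        have he : i + (2 * t + 1) = (i + 2 * t) + 1 := by ring
        rw [he]
        exact pair_bound hn hodd (i + 2 * t)
    _ = r * (n + 2) := by rw [Finset.sum_const, Finset.card_range, smul_eq_mul]

/-! ### Lower bound -/

lemma lower_bound {n k : ℕ} (hn : 0 < n) (hk0 : 0 < k) (hkn : k < n)
    (hkeven : Even k) (hmod : n % k = 1 ∨ n % k = k - 1) (π : Equiv.Perm (Fin n)) :
    k * (n + 2) ≤ 2 * maxksum n k π := by
  set M := maxksum n k π with hM
  have hsumF := sum_F π
  rcases hmod with h1 | h2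
  · -- n = k*m + 1
    set m := n / k with hm
    have hdm : k * m + 1 = n := by rw [hm, ← h1]; exact Nat.div_add_mod n k
    have hm1 : 0 < m := by
      rw [hm]; exact (Nat.one_le_div_iff hk0).2 (le_of_lt hkn)
    set p : Fin n := π.symm ⟨0, hn⟩ with hp
    have hFp : ((π (c n hn p.val) : ℕ) + 1) = 1 := by
      rw [c_coe hn, hp, Equiv.apply_symm_apply]
    have hblocks := sum_blocks hn k π (p.val + 1) m
    have hrange : Finset.range n = Finset.range (1 + m * k) := by
      congr 1; rw [Nat.mul_comm m k]; omega
    have hsplit : ∑ j ∈ Finset.range n, ((π (c n hn (p.val + j)) : ℕ) + 1)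
        = ((π (c n hn p.val) : ℕ) + 1)
          + ∑ j ∈ Finset.range (m * k), ((π (c n hn (p.val + 1 + j)) : ℕ) + 1) := by
      rw [hrange, Finset.sum_range_add, Finset.sum_range_one, add_zero]
      congr 1
      refine Finset.sum_congr rfl fun j _ => ?_
      rw [← add_assoc]
    rw [sum_window' hn π, hFp] at hsplit
    have hle : ∑ t ∈ Finset.range m, ksum n k π (p.val + 1 + t * k) ≤ m * M := by
      calc ∑ t ∈ Finset.range m, ksum n k π (p.val + 1 + t * k)
          ≤ ∑ _t ∈ Finset.range m, M :=
            Finset.sum_le_sum fun t _ => ksum_le_maxksum hn k π _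
        _ = m * M := by rw [Finset.sum_const, Finset.card_range, smul_eq_mul]
    rw [hblocks] at hle
    have hle2 := Nat.mul_le_mul_left 2 hle
    have e2 : m * (k * (k * m + 3)) + 2 = n * (n + 1) := by rw [← hdm]; ring
    have e3 : 2 * (m * M) = m * (2 * M) := by ring
    have e4 : m * (k * (k * m + 3)) ≤ m * (2 * M) := by omega
    have e5 : k * (k * m + 3) ≤ 2 * M := Nat.le_of_mul_le_mul_left e4 hm1
    calc k * (n + 2) = k * (k * m + 3) := by rw [← hdm]
      _ ≤ 2 * M := e5
  · -- n + 1 = m * k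
    have hd := Nat.div_add_mod n k
    rw [h2] at hd
    set m := n / k + 1 with hm
    have hq1 : 1 ≤ n / k := (Nat.one_le_div_iff hk0).2 (le_of_lt hkn)
    have hm2 : 2 ≤ m := by omega
    have hdm : m * k = n + 1 := by
      have hex : m * k = k * (n / k) + k := by rw [hm]; ring
      omega
    have hnlast : n - 1 < n := by omega
    set p : Fin n := π.symm ⟨n - 1, hnlast⟩ with hp
    have hFp : ((π (c n hn p.val) : ℕ) + 1) = n := by
      rw [c_coe hn, hp, Equiv.apply_symm_apply]
      simp
      omega
    have hblocks := sum_blocks hn k π p.val m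
    have hc : c n hn (p.val + n) = c n hn p.val := by
      simp [c, Fin.ext_iff, Nat.add_mod_right, Nat.mod_eq_of_lt p.isLt]
    have hsplit : ∑ j ∈ Finset.range (m * k), ((π (c n hn (p.val + j)) : ℕ) + 1)
        = (∑ j ∈ Finset.range n, ((π (c n hn (p.val + j)) : ℕ) + 1))
          + ((π (c n hn p.val) : ℕ) + 1) := by
      rw [hdm, Finset.sum_range_succ, hc]
    rw [sum_window' hn π, hFp] at hsplit
    have hle : ∑ t ∈ Finset.range m, ksum n k π (p.val + t * k) ≤ m * M := by
      calc ∑ t ∈ Finset.range m, ksum n k π (p.val + t * k)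
          ≤ ∑ _t ∈ Finset.range m, M :=
            Finset.sum_le_sum fun t _ => ksum_le_maxksum hn k π _
        _ = m * M := by rw [Finset.sum_const, Finset.card_range, smul_eq_mul]
    rw [hblocks, hsplit] at hle
    have hle2 := Nat.mul_le_mul_left 2 hle
    have e3 : 2 * (m * M) = m * (2 * M) := by ring
    have key : n * (n + 1) + 2 * n ≤ m * (2 * M) := by omega
    -- parity: k*(n+2) is even
    obtain ⟨r, hr⟩ := hkeven
    have hpar : k * (n + 2) = 2 * (r * (n + 2)) := by rw [hr]; ring
    by_contra hcon
    push_neg at hcon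
    have h2M : 2 * M + 2 ≤ k * (n + 2) := by omega
    have hmul : m * (2 * M + 2) ≤ m * (k * (n + 2)) := Nat.mul_le_mul_left m h2M
    have hkey2 : m * (k * (n + 2)) = (n + 1) * (n + 2) := by
      rw [← mul_assoc, hdm]
    have hexp : (n + 1) * (n + 2) = n * (n + 1) + 2 * n + 2 := by ring
    have hexp2 : m * (2 * M + 2) = m * (2 * M) + 2 * m := by ring
    omega

end Stmt16Aux

open Stmt16Aux in
theorem stmt16 (n k : ℕ) (hk : Even k) (hk0 : 0 < k) (hkn : k < n)
    (hmod : n % k = 1 ∨ n % k = k - 1) :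
    msum n k = (k : ℚ) / 2 := by
  have hn : 0 < n := lt_trans hk0 hkn
  obtain ⟨r, hr⟩ := hk
  have hkr : k = 2 * r := by omega
  have hr0 : 0 < r := by omega
  -- n is odd
  have hodd : n % 2 = 1 := by
    have hdm := Nat.div_add_mod n k
    obtain ⟨u, hu⟩ : ∃ u, k * (n / k) = 2 * u := ⟨r * (n / k), by rw [hkr]; ring⟩
    rcases hmod with h | h <;> rw [h] at hdm <;> omega
  apply le_antisymm
  · -- upper bound via the construction
    have hub := maxksum_perm_le hn hodd hkr
    unfold msum
    refine le_trans (Finset.inf'_le _ (Finset.mem_univ (perm n hn hodd))) ?_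
    have hcast : (maxksum n k (perm n hn hodd) : ℚ) ≤ (r : ℚ) * ((n : ℚ) + 2) := by
      exact_mod_cast hub
    have hk2 : (k : ℚ) = 2 * (r : ℚ) := by exact_mod_cast hkr
    rw [hk2]
    linarith
  · -- lower bound
    unfold msum
    apply Finset.le_inf'
    intro π _
    have hlb := lower_bound hn hk0 hkn ⟨r, by omega⟩ hmod π
    have hcast : (k : ℚ) * ((n : ℚ) + 2) ≤ 2 * (maxksum n k π : ℚ) := by
      exact_mod_cast hlb
    linarith
end
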